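/- arXiv:1301.3106 — 15 statements merged into one kernel-verified Lean document; each statement's English description precedes it below -/
import Mathlib

section
/- Theorem 9 (duality of linear schemes for multiple unicast): Let F be a field, 𝒲 a finite message set, σ : 𝒲 → Fin S and δ : 𝒲 → Fin D maps (message W originates at source σ W and is desired only by destination δ W), t : Fin D → Fin S → Bool a topology, N ∈ ℕ and L : 𝒲 → ℕ. Then there exist matrices V(W) ∈ Matrix (Fin N) (Fin (L W)) F and U(W) ∈ Matrix (Fin (L W)) (Fin N) F satisfying (i) U(W) * V(W') = 0 for all W ≠ W' with t (δ W) (σ W') = true, and (ii) det(U(W) * V(W)) ≠ 0 for all W, if and only if such matrices exist for the dual instance in which the roles of sources and destinations are swapped: source map δ, destination map σ, and dual topology t' : Fin S → Fin D → Bool given by t' j i := t i j. Explicitly, if (V, U) satisfies (i) and (ii) for the original instance, then V'(W) := (U(W))ᵀ and U'(W) := (V(W))ᵀ satisfy them for the dual instance. -/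
open Matrix

/-- **Theorem 9** (duality of linear schemes for multiple unicast topological
interference management). A rate tuple is linearly achievable in a multiple
unicast TIM instance iff it is linearly achievable in the dual instance where
the roles of sources and destinations are reversed; explicitly, transposing and
swapping the precoding and combining matrices turns a linear scheme for the
original instance into one for the dual instance. -/
theorem tim_linear_scheme_duality
    {F : Type*} [Field F] {S D : ℕ} {𝒲 : Type*} [Fintype 𝒲]
    (σ : 𝒲 → Fin S) (δ : 𝒲 → Fin D) (t : Fin D → Fin S → Bool)
    (N : ℕ) (L : 𝒲 → ℕ) :
    -- a linear scheme exists for the original instance iff one exists for the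
    -- dual instance (dual topology t' j i := t i j, source map δ, dest map σ)
    ((∃ (V : (W : 𝒲) → Matrix (Fin N) (Fin (L W)) F)
        (U : (W : 𝒲) → Matrix (Fin (L W)) (Fin N) F),
        (∀ W W' : 𝒲, W ≠ W' → t (δ W) (σ W') = true → U W * V W' = 0) ∧
        (∀ W : 𝒲, (U W * V W).det ≠ 0)) ↔
     (∃ (V' : (W : 𝒲) → Matrix (Fin N) (Fin (L W)) F)
        (U' : (W : 𝒲) → Matrix (Fin (L W)) (Fin N) F),
        (∀ W W' : 𝒲, W ≠ W' → (fun (j : Fin S) (i : Fin D) => t i j) (σ W) (δ W') = true →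
          U' W * V' W' = 0) ∧
        (∀ W : 𝒲, (U' W * V' W).det ≠ 0))) ∧
    -- explicit duality map: V'(W) := (U W)ᵀ, U'(W) := (V W)ᵀ
    (∀ (V : (W : 𝒲) → Matrix (Fin N) (Fin (L W)) F)
       (U : (W : 𝒲) → Matrix (Fin (L W)) (Fin N) F),
       ((∀ W W' : 𝒲, W ≠ W' → t (δ W) (σ W') = true → U W * V W' = 0) ∧
        (∀ W : 𝒲, (U W * V W).det ≠ 0)) →
       ((∀ W W' : 𝒲, W ≠ W' → (fun (j : Fin S) (i : Fin D) => t i j) (σ W) (δ W') = true →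
          (V W)ᵀ * (U W')ᵀ = 0) ∧
        (∀ W : 𝒲, ((V W)ᵀ * (U W)ᵀ).det ≠ 0))) := by
  have key : ∀ (r : 𝒲 → 𝒲 → Prop)
      (V : (W : 𝒲) → Matrix (Fin N) (Fin (L W)) F)
      (U : (W : 𝒲) → Matrix (Fin (L W)) (Fin N) F),
      ((∀ W W' : 𝒲, W ≠ W' → r W W' → U W * V W' = 0) ∧
       (∀ W : 𝒲, (U W * V W).det ≠ 0)) →
      ((∀ W W' : 𝒲, W ≠ W' → r W' W → (V W)ᵀ * (U W')ᵀ = 0) ∧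
       (∀ W : 𝒲, ((V W)ᵀ * (U W)ᵀ).det ≠ 0)) := by
    rintro r V U ⟨h1, h2⟩
    constructor
    · intro W W' hne ht
      rw [← Matrix.transpose_mul, h1 W' W (Ne.symm hne) ht, Matrix.transpose_zero]
    · intro W
      rw [← Matrix.transpose_mul, Matrix.det_transpose]
      exact h2 W
  constructor
  · constructor
    · rintro ⟨V, U, h⟩
      obtain ⟨h1, h2⟩ := key (fun W W' => t (δ W) (σ W') = true) V U h
      exact ⟨fun W => (U W)ᵀ, fun W => (V W)ᵀ, h1, h2⟩
    · rintro ⟨V', U', h⟩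
      obtain ⟨h1, h2⟩ := key (fun W W' => t (δ W') (σ W) = true) V' U' h
      exact ⟨fun W => (U' W)ᵀ, fun W => (V' W)ᵀ, h1, h2⟩
  · intro V U h
    exact key (fun W W' => t (δ W) (σ W') = true) V U h
end

section
/- Theorem 3, achievability direction (half the cake for everyone when there are no internal conflicts): Let a TIM instance over ℂ be given: source indices Fin S, destination indices Fin D, a finite message set 𝒲 with source map σ : 𝒲 → Fin S, desire relation des : Fin D → 𝒲 → Prop, and topology t : Fin D → Fin S → Bool. If the instance has no internal conflicts, then there exists v : 𝒲 → ℂ² such that for every destination i and every message W with des i W, the vector v(W) does not belong to the ℂ-linear span of the set {v(W') : W' ∈ 𝒲, W' ≠ W, t i (σ W') = true}. (This is exactly a linear scheme with N = 2 channel uses and L = 1 symbol per message, achieving symmetric rate/DoF 1/2 per message.) -/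
/-- **Theorem 3, achievability direction** (everyone gets half the cake when
there are no internal conflicts). If a TIM instance over `ℂ` has no internal
conflicts — no conflicting pair of messages lies in the same connected
component of the alignment graph — then there is an assignment of a vector
`v W ∈ ℂ²` to every message such that at every destination the desired
message's vector avoids the span of the vectors of all heard interfering
messages: a linear scheme with `N = 2` channel uses and `L = 1` symbol per
message, achieving symmetric rate/DoF `1/2`. -/
theorem tim_half_rate_achievable_of_no_internal_conflicts
    {S D : ℕ} {𝒲 : Type*} [Fintype 𝒲]
    (σ : 𝒲 → Fin S) (des : Fin D → 𝒲 → Prop) (t : Fin D → Fin S → Bool)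
    -- the alignment graph
    (G : SimpleGraph 𝒲)
    (hG : G = SimpleGraph.fromRel (fun W W' =>
      ∃ (i : Fin D) (W'' : 𝒲), des i W'' ∧ W'' ≠ W ∧ W'' ≠ W' ∧
        t i (σ W) = true ∧ t i (σ W') = true))
    -- no internal conflicts: a conflicting pair is never in the same
    -- connected component of the alignment graph
    (hnoInternal : ∀ W W' : 𝒲, W ≠ W' →
      (∃ i : Fin D, des i W ∧ t i (σ W') = true) → ¬ G.Reachable W W') :
    ∃ v : 𝒲 → (Fin 2 → ℂ),
      ∀ (i : Fin D) (W : 𝒲), des i W →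
        v W ∉ Submodule.span ℂ (v '' {W' : 𝒲 | W' ≠ W ∧ t i (σ W') = true}) := by
  classical
  have hfin : Finite (G.ConnectedComponent) := Quot.finite _
  obtain ⟨n, ⟨eqv⟩⟩ := Finite.exists_equiv_fin (G.ConnectedComponent)
  set e : G.ConnectedComponent → ℂ := fun c => ((eqv c : Fin n) : ℕ) with he_def
  have he : Function.Injective e := by
    intro a b hab
    apply eqv.injective
    exact Fin.val_injective (Nat.cast_injective hab)
  set v : 𝒲 → (Fin 2 → ℂ) := fun W => ![1, e (G.connectedComponentMk W)] with hv_def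
  refine ⟨v, ?_⟩
  intro i W hdes hmem
  set Sset : Set 𝒲 := {W' : 𝒲 | W' ≠ W ∧ t i (σ W') = true} with hSset
  by_cases hS : Sset.Nonempty
  · obtain ⟨W₀, hW₀⟩ := hS
    have hsub : v '' Sset ⊆ {v W₀} := by
      rintro _ ⟨W₁, hW₁, rfl⟩
      have hcomp : G.connectedComponentMk W₁ = G.connectedComponentMk W₀ := by
        by_cases h10 : W₁ = W₀
        · rw [h10]
        · apply SimpleGraph.ConnectedComponent.sound
          apply SimpleGraph.Adj.reachable
          rw [hG]
          exact ⟨h10, Or.inl ⟨i, W, hdes, Ne.symm hW₁.1, Ne.symm hW₀.1, hW₁.2, hW₀.2⟩⟩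
      simp [hv_def, hcomp]
    have hmem' : v W ∈ Submodule.span ℂ {v W₀} :=
      Submodule.span_mono hsub hmem
    rw [Submodule.mem_span_singleton] at hmem'
    obtain ⟨a, ha⟩ := hmem'
    have h0 : a * (v W₀ 0) = v W 0 := congrFun ha 0
    have h1 : a * (v W₀ 1) = v W 1 := congrFun ha 1
    have hv0 : ∀ X : 𝒲, v X 0 = 1 := fun X => rfl
    have hv1 : ∀ X : 𝒲, v X 1 = e (G.connectedComponentMk X) := fun X => rfl
    rw [hv0, hv0, mul_one] at h0
    subst h0
    rw [hv1, hv1, one_mul] at h1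
    have hcompW : G.connectedComponentMk W₀ = G.connectedComponentMk W := he h1
    have hreach : G.Reachable W W₀ :=
      (SimpleGraph.ConnectedComponent.eq.mp hcompW).symm
    exact hnoInternal W W₀ (Ne.symm hW₀.1) ⟨i, hdes, hW₀.2⟩ hreach
  · rw [Set.not_nonempty_iff_eq_empty] at hS
    rw [hS, Set.image_empty, Submodule.span_empty, Submodule.mem_bot] at hmem
    have : v W 0 = 0 := by rw [hmem]; rfl
    simp [hv_def] at this
end

section
/- Linear-scheme converse along an alignment chain (the linear version of the outer bound C_sym ≤ Δ/(2Δ+1) of Theorem 10 and its Corollary): Let F be a field and N, L, Δ positive integers. Suppose V_0, V_1, …, V_Δ ∈ Matrix (Fin N) (Fin L) F each have rank L; for every j ∈ {0, …, Δ−1} there is a matrix U_j ∈ Matrix (Fin L) (Fin N) F of rank L with U_j * V_j = 0 and U_j * V_{j+1} = 0; and there is a matrix U ∈ Matrix (Fin L) (Fin N) F with U * V_0 = 0 and det(U * V_Δ) ≠ 0. Then (2Δ+1)·L ≤ Δ·N. -/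
/-- **Linear-scheme converse along an alignment chain** (linear version of the
outer bound `C_sym ≤ Δ/(2Δ+1)` of Theorem 10 and its Corollary). If the
precoding matrices `V 0, …, V Δ` (each of rank `L`) form a chain in which
consecutive pairs are annihilated by rank-`L` combining matrices, while a
combining matrix `U` annihilates `V 0` yet recovers `V Δ`
(`det (U * V Δ) ≠ 0`), then `(2Δ+1)·L ≤ Δ·N`. -/
theorem tim_linear_chain_bound
    {F : Type*} [Field F] (N L Δ : ℕ) (hN : 0 < N) (hL : 0 < L) (hΔ : 0 < Δ)
    (V : Fin (Δ + 1) → Matrix (Fin N) (Fin L) F)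
    (hVrank : ∀ j, (V j).rank = L)
    (U : Fin Δ → Matrix (Fin L) (Fin N) F)
    (hUrank : ∀ j, (U j).rank = L)
    (hU1 : ∀ j : Fin Δ, U j * V j.castSucc = 0)
    (hU2 : ∀ j : Fin Δ, U j * V j.succ = 0)
    (Ulast : Matrix (Fin L) (Fin N) F)
    (hUlast0 : Ulast * V 0 = 0)
    (hUlastDet : (Ulast * V (Fin.last Δ)).det ≠ 0) :
    (2 * Δ + 1) * L ≤ Δ * N := by
  classical
  -- column spans
  set S : Fin (Δ + 1) → Submodule F (Fin N → F) :=
    fun j => LinearMap.range (V j).mulVecLin with hSdef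
  have hSdim : ∀ j, Module.finrank F (S j) = L := fun j => hVrank j
  have hLN : L ≤ N := by
    have h := Matrix.rank_le_card_width (U ⟨0, hΔ⟩)
    rw [hUrank] at h
    simpa using h
  -- kernels of the combining maps
  have hKdim : ∀ j : Fin Δ,
      Module.finrank F (LinearMap.ker (U j).mulVecLin) = N - L := by
    intro j
    have h := LinearMap.finrank_range_add_finrank_ker (U j).mulVecLin
    have hr : Module.finrank F (LinearMap.range (U j).mulVecLin) = L := hUrank j
    have hfin : Module.finrank F (Fin N → F) = N := by simp
    omega
  -- range-in-kernel facts from the annihilation hypotheses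
  have key : ∀ (A : Matrix (Fin L) (Fin N) F) (B : Matrix (Fin N) (Fin L) F),
      A * B = 0 → LinearMap.range B.mulVecLin ≤ LinearMap.ker A.mulVecLin := by
    intro A B hAB
    rw [LinearMap.range_le_ker_iff, ← Matrix.mulVecLin_mul, hAB]
    exact Matrix.mulVecLin_zero
  -- the chain of intersections
  have hmin : ∀ n : ℕ, min n Δ < Δ + 1 := fun n => by omega
  set g : ℕ → Fin (Δ + 1) := fun n => ⟨min n Δ, hmin n⟩ with hg
  set T : ℕ → Submodule F (Fin N → F) :=
    fun n => (Finset.range (n + 1)).inf (fun i => S (g i)) with hT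
  have hTsucc : ∀ n, T (n + 1) = S (g (n + 1)) ⊓ T n := by
    intro n
    rw [hT]
    simp [Finset.range_add_one, Finset.inf_insert]
  have hTle : ∀ n k, k ≤ n → T n ≤ S (g k) := by
    intro n k hk
    exact Finset.inf_le (by simp [Finset.mem_range]; omega)
  -- main induction
  have main : ∀ k, k ≤ Δ → L + 2 * k * L ≤ Module.finrank F (T k) + k * N := by
    intro k
    induction k with
    | zero =>
      intro _
      have : T 0 = S (g 0) := by simp [hT]
      rw [this, hSdim]
      omega
    | succ k ih =>
      intro hk1
      have hkΔ : k < Δ := by omega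
      have ihh := ih (by omega)
      set j : Fin Δ := ⟨k, hkΔ⟩ with hj
      have hgk : g k = j.castSucc := by
        apply Fin.ext; simp [hg, hj, Fin.castSucc]; omega
      have hgk1 : g (k + 1) = j.succ := by
        apply Fin.ext; simp [hg, hj]; omega
      have hA : T k ≤ LinearMap.ker (U j).mulVecLin := by
        refine le_trans (hTle k k le_rfl) ?_
        rw [hgk]
        exact key _ _ (hU1 j)
      have hB : S (g (k + 1)) ≤ LinearMap.ker (U j).mulVecLin := by
        rw [hgk1]
        exact key _ _ (hU2 j)
      have hsup : T k ⊔ S (g (k + 1)) ≤ LinearMap.ker (U j).mulVecLin :=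
        sup_le hA hB
      have hsupdim : Module.finrank F ↥(T k ⊔ S (g (k + 1))) ≤ N - L := by
        rw [← hKdim j]
        exact Submodule.finrank_mono hsup
      have hformula := Submodule.finrank_sup_add_finrank_inf_eq (T k) (S (g (k + 1)))
      rw [hSdim] at hformula
      have hT1 : Module.finrank F ↥(T (k + 1)) =
          Module.finrank F ↥(T k ⊓ S (g (k + 1))) := by
        rw [hTsucc k, inf_comm]
      rw [hT1] at *
      have step2 : Module.finrank F ↥(T k) + 2 * L ≤
          N + Module.finrank F ↥(T k ⊓ S (g (k + 1))) := by omega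
      have hexp : L + 2 * (k + 1) * L = (L + 2 * k * L) + 2 * L := by ring
      have hexp2 : (k + 1) * N = k * N + N := by ring
      rw [hexp, hexp2]
      linarith
  have hfinal := main Δ le_rfl
  -- T Δ = ⊥
  have hbot : T Δ = ⊥ := by
    rw [eq_bot_iff]
    intro x hx
    have hx0 : x ∈ S 0 := by
      have := hTle Δ 0 (by omega) hx
      have hg0 : g 0 = 0 := by apply Fin.ext; simp [hg]
      rwa [hg0] at this
    have hxΔ : x ∈ S (Fin.last Δ) := by
      have := hTle Δ Δ le_rfl hx
      have hgΔ : g Δ = Fin.last Δ := by apply Fin.ext; simp [hg, Fin.last]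
      rwa [hgΔ] at this
    obtain ⟨c, hc⟩ := hxΔ
    have hUx : Ulast.mulVec x = 0 := by
      have h0 := key Ulast (V 0) hUlast0 hx0
      simpa using h0
    have hcv : (Ulast * V (Fin.last Δ)).mulVec c = 0 := by
      rw [← Matrix.mulVec_mulVec]
      rw [show (V (Fin.last Δ)).mulVec c = x from hc] at *
      exact hUx
    have hinj : Function.Injective (Ulast * V (Fin.last Δ)).mulVec :=
      Matrix.mulVec_injective_iff_isUnit.2
        ((Matrix.isUnit_iff_isUnit_det _).2 (isUnit_iff_ne_zero.2 hUlastDet))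
    have hc0 : c = 0 := by
      apply hinj
      simpa using hcv
    rw [hc0] at hc
    simp only [Submodule.mem_bot]
    simpa using hc.symm
  rw [hbot] at hfinal
  simp only [finrank_bot, zero_add] at hfinal
  -- conclude
  nlinarith [hfinal, hLN]
end

section
/- Linear-scheme bound for acyclic subsets of messages (linear version of the bound C_sym ≤ 1/Ψ in Theorem 14): Let F be a field, N, L, n positive integers, and let V_1, …, V_n ∈ Matrix (Fin N) (Fin L) F and U_1, …, U_n ∈ Matrix (Fin L) (Fin N) F satisfy U_k * V_{k'} = 0 for all 1 ≤ k' < k ≤ n and det(U_k * V_k) ≠ 0 for all k ∈ {1, …, n}. Then the column spaces of V_1, …, V_n are in direct sum (the submodules spanned by their columns are independent), and consequently n·L ≤ N. -/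
open Matrix

/-- Key triangular argument: if each `g k` lies in the column space of `V k`
and the `g k` sum to zero, then all `g k` vanish. -/
private lemma tim_key {F : Type*} [Field F] {N L n : ℕ}
    (V : Fin n → Matrix (Fin N) (Fin L) F)
    (U : Fin n → Matrix (Fin L) (Fin N) F)
    (hzero : ∀ k k' : Fin n, k' < k → U k * V k' = 0)
    (hdet : ∀ k : Fin n, (U k * V k).det ≠ 0)
    (g : Fin n → Fin N → F)
    (hg : ∀ k, g k ∈ LinearMap.range (V k).mulVecLin)
    (hsum : ∑ k, g k = 0) : ∀ k, g k = 0 := by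
  choose x hx using hg
  have hinj : ∀ k, Function.Injective ((U k * V k).mulVec) := fun k =>
    Matrix.mulVec_injective_iff_isUnit.mpr
      ((Matrix.isUnit_iff_isUnit_det _).mpr (isUnit_iff_ne_zero.mpr (hdet k)))
  have main : ∀ m : ℕ, ∀ k : Fin n, n - (k : ℕ) ≤ m → g k = 0 := by
    intro m
    induction m with
    | zero => intro k hk; exact absurd k.isLt (by omega)
    | succ m ih =>
      intro k hk
      have hgt : ∀ j : Fin n, k < j → g j = 0 := by
        intro j hj
        have : (k : ℕ) < (j : ℕ) := hj
        exact ih j (by omega)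
      have h0 : ∑ j, (U k).mulVecLin (g j) = 0 := by
        rw [← map_sum, hsum, map_zero]
      have h1 : (U k).mulVecLin (g k) = 0 := by
        rw [Finset.sum_eq_single_of_mem k (Finset.mem_univ k)] at h0
        · exact h0
        · intro j _ hjk
          rcases lt_or_gt_of_ne hjk with h | h
          · rw [← hx j, Matrix.mulVecLin_apply, Matrix.mulVecLin_apply,
              Matrix.mulVec_mulVec, hzero k j h, Matrix.zero_mulVec]
          · rw [hgt j h, map_zero]
      have h2 : (U k * V k) *ᵥ x k = (U k * V k) *ᵥ 0 := by
        rw [Matrix.mulVec_zero, ← Matrix.mulVec_mulVec, ← Matrix.mulVecLin_apply (U k),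
          ← Matrix.mulVecLin_apply (V k), hx k, h1]
      have h3 : x k = 0 := hinj k h2
      rw [← hx k, h3, map_zero]
  exact fun k => main n k (by omega)

/-- **Linear-scheme bound for acyclic subsets of messages** (linear version of
the bound `C_sym ≤ 1/Ψ` in Theorem 14). If the messages can be ordered so that
each combining matrix `U k` zero-forces all earlier precoding matrices while
recovering its own message, then the column spaces of the precoding matrices
are independent (in direct sum), and consequently `n·L ≤ N`. -/
theorem tim_linear_acyclic_bound
    {F : Type*} [Field F] (N L n : ℕ) (hN : 0 < N) (hL : 0 < L) (hn : 0 < n)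
    (V : Fin n → Matrix (Fin N) (Fin L) F)
    (U : Fin n → Matrix (Fin L) (Fin N) F)
    (hzero : ∀ k k' : Fin n, k' < k → U k * V k' = 0)
    (hdet : ∀ k : Fin n, (U k * V k).det ≠ 0) :
    iSupIndep (fun k : Fin n => LinearMap.range (V k).mulVecLin) ∧ n * L ≤ N := by
  have key := tim_key V U hzero hdet
  set p : Fin n → Submodule F (Fin N → F) := fun k => LinearMap.range (V k).mulVecLin with hp
  have hinj : ∀ k, Function.Injective ((U k * V k).mulVec) := fun k =>
    Matrix.mulVec_injective_iff_isUnit.mpr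
      ((Matrix.isUnit_iff_isUnit_det _).mpr (isUnit_iff_ne_zero.mpr (hdet k)))
  constructor
  · intro i
    rw [Submodule.disjoint_def]
    intro a hai hasup
    rw [Submodule.mem_iSup_iff_exists_finsupp] at hasup
    obtain ⟨f, hf, hfs⟩ := hasup
    have hfi : f i = 0 := by
      have := hf i
      rw [iSup_neg (by simp)] at this
      simpa using this
    have hfj : ∀ j, j ≠ i → f j ∈ p j := by
      intro j hj
      have := hf j
      rwa [iSup_pos hj] at this
    have hsumf : ∑ j, f j = a := by
      rw [← hfs, Finsupp.sum_fintype]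
      exact fun _ => rfl
    set g : Fin n → Fin N → F := fun j => if j = i then -a else f j with hgdef
    have hg : ∀ j, g j ∈ p j := by
      intro j
      by_cases h : j = i
      · subst h; simpa [hgdef] using neg_mem hai
      · simpa [hgdef, h] using hfj j h
    have hgsum : ∑ j, g j = 0 := by
      have step : ∀ j ∈ Finset.univ, g j = f j + (if j = i then -a - f i else 0) := by
        intro j _
        by_cases h : j = i
        · subst h; simp [hgdef, hfi]
        · simp [hgdef, h]
      rw [Finset.sum_congr rfl step, Finset.sum_add_distrib, hsumf,
        Finset.sum_ite_eq' Finset.univ i (fun _ => -a - f i), if_pos (Finset.mem_univ i), hfi]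
      abel
    exact neg_eq_zero.mp (by simpa [hgdef] using key g hg hgsum i)
  · -- linear independence of all columns
    have hw : LinearIndependent F
        (fun q : Fin n × Fin L => (V q.1).mulVecLin (Pi.single q.2 1)) := by
      rw [Fintype.linearIndependent_iff]
      intro c hc
      set g : Fin n → Fin N → F := fun k => (V k).mulVecLin (fun l => c (k, l)) with hgdef
      have hg : ∀ k, g k ∈ p k := fun k => ⟨_, rfl⟩
      have expand : ∀ k, g k = ∑ l, c (k, l) • (V k).mulVecLin (Pi.single l 1) := by
        intro k
        show (V k).mulVecLin (fun l => c (k, l)) = _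
        conv_lhs => rw [pi_eq_sum_univ (fun l => c (k, l))]
        rw [map_sum]
        refine Finset.sum_congr rfl fun l _ => ?_
        rw [_root_.map_smul]
        have h1 : (fun j : Fin L => if l = j then (1 : F) else 0) = Pi.single l 1 := by
          ext j; simp [Pi.single_apply, eq_comm]
        rw [h1]
      have hgsum : ∑ k, g k = 0 := by
        rw [← hc, Fintype.sum_prod_type]
        exact Finset.sum_congr rfl fun k _ => expand k
      have hz := key g hg hgsum
      rintro ⟨k, l⟩
      have hVk : (V k) *ᵥ (fun l => c (k, l)) = 0 := by
        simpa [hgdef, Matrix.mulVecLin_apply] using hz k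
      have h2 : (U k * V k) *ᵥ (fun l => c (k, l)) = (U k * V k) *ᵥ 0 := by
        rw [Matrix.mulVec_zero, ← Matrix.mulVec_mulVec, hVk, Matrix.mulVec_zero]
      have := congrFun (hinj k h2) l
      simpa using this
    have hcard := hw.fintype_card_le_finrank
    simpa [Module.finrank_fin_fun] using hcard
end

section
/- Combinatorial core of Theorem 4 (fractional orthogonal scheduling achieves one quarter of the cake in half-rate-feasible multiple unicast networks): Let 𝒲 be a finite set, C : 𝒲 → 𝒲 → Prop a relation, m ≥ 2 a natural number, and α, β : 𝒲 → Fin m maps such that (i) for all w, w' ∈ 𝒲, C w w' implies α w' = β w, and (ii) α w ≠ β w for all w ∈ 𝒲. For R ⊆ Fin m define S_R := {w ∈ 𝒲 : α w ∈ R and β w ∉ R}. Then: (a) for every R ⊆ Fin m, the set S_R is C-independent, i.e., there are no w, w' ∈ S_R with C w w'; and (b) every w ∈ 𝒲 belongs to S_R for exactly choose(m−2, ⌊m/2⌋−1) of the ⌊m/2⌋-element subsets R of Fin m (out of choose(m, ⌊m/2⌋) such subsets in total). -/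
/-- **Combinatorial core of Theorem 4** (fractional orthogonal scheduling
achieves a quarter of the cake in half-rate-feasible multiple unicast
networks). With `α w` the alignment set of message `w` and `β w` the alignment
set containing all its interferers, the sets
`S_R = {w | α w ∈ R ∧ β w ∉ R}` are conflict-independent for every
`R ⊆ Fin m`, and each message lies in exactly `choose (m-2) (⌊m/2⌋-1)` of the
`⌊m/2⌋`-element subsets `R` (out of `choose m ⌊m/2⌋` such subsets in total). -/
theorem tim_fractional_orthogonal_quarter
    {𝒲 : Type*} [Fintype 𝒲] (C : 𝒲 → 𝒲 → Prop) (m : ℕ) (hm : 2 ≤ m)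
    (α β : 𝒲 → Fin m)
    (h1 : ∀ w w' : 𝒲, C w w' → α w' = β w)
    (h2 : ∀ w : 𝒲, α w ≠ β w) :
    -- (a) each S_R is C-independent
    (∀ R : Finset (Fin m), ∀ w w' : 𝒲,
        (α w ∈ R ∧ β w ∉ R) → (α w' ∈ R ∧ β w' ∉ R) → ¬ C w w') ∧
    -- (b) each message belongs to S_R for exactly choose(m-2, ⌊m/2⌋-1) of the
    -- ⌊m/2⌋-element subsets R of Fin m
    (∀ w : 𝒲,
        (((Finset.univ : Finset (Fin m)).powersetCard (m / 2)).filter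
            (fun R => α w ∈ R ∧ β w ∉ R)).card
          = Nat.choose (m - 2) (m / 2 - 1)) ∧
    -- out of choose(m, ⌊m/2⌋) such subsets in total
    ((Finset.univ : Finset (Fin m)).powersetCard (m / 2)).card
        = Nat.choose m (m / 2) := by
  have hk : 1 ≤ m / 2 := Nat.one_le_div_iff (by norm_num) |>.mpr hm
  refine ⟨?_, ?_, ?_⟩
  · rintro R w w' ⟨_, hbw⟩ ⟨haw', _⟩ hc
    exact hbw (h1 w w' hc ▸ haw')
  · intro w
    set a := α w with ha
    set b := β w with hb
    have hab : a ≠ b := h2 w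
    have hmem : ∀ R : Finset (Fin m),
        R ∈ ((Finset.univ : Finset (Fin m)).powersetCard (m / 2)).filter
          (fun R => a ∈ R ∧ b ∉ R) ↔ R.card = m / 2 ∧ a ∈ R ∧ b ∉ R := by
      intro R
      simp [Finset.mem_powersetCard, Finset.mem_filter]
    have key : (((Finset.univ : Finset (Fin m)).powersetCard (m / 2)).filter
          (fun R => a ∈ R ∧ b ∉ R)).card
        = ((((Finset.univ : Finset (Fin m)).erase b).erase a).powersetCard
            (m / 2 - 1)).card := by
      refine Finset.card_bij' (fun R _ => R.erase a) (fun S _ => insert a S) ?_ ?_ ?_ ?_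
      · intro R hR
        rw [hmem] at hR
        obtain ⟨hcard, haR, hbR⟩ := hR
        rw [Finset.mem_powersetCard]
        constructor
        · intro x hx
          rw [Finset.mem_erase] at hx ⊢
          refine ⟨hx.1, Finset.mem_erase.mpr ⟨?_, Finset.mem_univ x⟩⟩
          rintro rfl; exact hbR hx.2
        · rw [Finset.card_erase_of_mem haR, hcard]
      · intro S hS
        rw [Finset.mem_powersetCard] at hS
        obtain ⟨hsub, hcard⟩ := hS
        have haS : a ∉ S := fun h => (Finset.mem_erase.mp (hsub h)).1 rfl
        rw [hmem]
        refine ⟨?_, Finset.mem_insert_self _ _, ?_⟩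
        · rw [Finset.card_insert_of_notMem haS, hcard]
          omega
        · intro hbI
          rcases Finset.mem_insert.mp hbI with h | h
          · exact hab h.symm
          · exact (Finset.mem_erase.mp (Finset.mem_erase.mp (hsub h)).2).1 rfl
      · intro R hR
        rw [hmem] at hR
        exact Finset.insert_erase hR.2.1
      · intro S hS
        rw [Finset.mem_powersetCard] at hS
        have haS : a ∉ S := fun h => (Finset.mem_erase.mp (hS.1 h)).1 rfl
        exact Finset.erase_insert haS
    rw [key, Finset.card_powersetCard]
    rw [Finset.card_erase_of_mem
        (Finset.mem_erase.mpr ⟨hab, Finset.mem_univ a⟩),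
      Finset.card_erase_of_mem (Finset.mem_univ b), Finset.card_univ,
      Fintype.card_fin]
    congr 1
  · rw [Finset.card_powersetCard, Finset.card_univ, Fintype.card_fin]
end

section
/- Corollary of Theorem 4 (large independent sets in half-rate-feasible unicast networks): Let 𝒲 be a finite set, C : 𝒲 → 𝒲 → Prop a relation, m ≥ 2 a natural number, and α, β : 𝒲 → Fin m maps such that (i) for all w, w' ∈ 𝒲, C w w' implies α w' = β w, and (ii) α w ≠ β w for all w ∈ 𝒲. Then there exists a C-independent subset S ⊆ 𝒲 (no w, w' ∈ S with C w w') such that 4·|S| ≥ |𝒲|. -/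
open Finset

lemma count_subsets {m : ℕ} (a b : Fin m) (hab : a ≠ b) :
    ((univ : Finset (Fin m)).powerset.filter (fun A => a ∈ A ∧ b ∉ A)).card = 2 ^ (m - 2) := by
  classical
  set e : Finset (Fin m) := (univ.erase a).erase b with he
  have hcard_e : e.card = m - 2 := by
    rw [he, card_erase_of_mem (by simp [hab.symm]), card_erase_of_mem (mem_univ a), card_univ,
      Fintype.card_fin]
    omega
  have hae : a ∉ e := by simp [he]
  have hset : (univ : Finset (Fin m)).powerset.filter (fun A => a ∈ A ∧ b ∉ A)
      = e.powerset.image (insert a) := by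
    ext A
    simp only [mem_filter, mem_powerset, mem_image]
    constructor
    · rintro ⟨-, haA, hbA⟩
      refine ⟨A.erase a, ?_, insert_erase haA⟩
      intro x hx
      rcases mem_erase.mp hx with ⟨hxa, hxA⟩
      have hxb : x ≠ b := fun h => hbA (h ▸ hxA)
      simp [he, hxa, hxb]
    · rintro ⟨B, hB, rfl⟩
      refine ⟨subset_univ _, mem_insert_self a B, ?_⟩
      intro hb
      rcases mem_insert.mp hb with h | h
      · exact hab h.symm
      · have := hB h; simp [he] at this
  rw [hset, card_image_of_injOn, card_powerset, hcard_e]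
  intro x hx y hy hxy
  have hax : a ∉ x := fun h => hae (mem_powerset.mp hx h)
  have hay : a ∉ y := fun h => hae (mem_powerset.mp hy h)
  rw [← erase_insert hax, ← erase_insert hay, hxy]

/-- **Corollary of Theorem 4** (large independent sets in half-rate-feasible
unicast networks). With `α w` the alignment set of message `w` and `β w` the
alignment set containing all its interferers, there is a conflict-independent
set of messages containing at least a quarter of all messages. -/
theorem tim_half_rate_feasible_large_independent_set
    {𝒲 : Type*} [Fintype 𝒲] (C : 𝒲 → 𝒲 → Prop) (m : ℕ) (hm : 2 ≤ m)
    (α β : 𝒲 → Fin m)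
    (h1 : ∀ w w' : 𝒲, C w w' → α w' = β w)
    (h2 : ∀ w : 𝒲, α w ≠ β w) :
    ∃ S : Finset 𝒲, (∀ w ∈ S, ∀ w' ∈ S, ¬ C w w') ∧
      Fintype.card 𝒲 ≤ 4 * S.card := by
  classical
  set P := (univ : Finset (Fin m)).powerset with hP
  have hsum : ∑ A ∈ P, (univ.filter (fun w => α w ∈ A ∧ β w ∉ A)).card
      = Fintype.card 𝒲 * 2 ^ (m - 2) := by
    simp_rw [card_filter]
    rw [Finset.sum_comm]
    rw [Finset.sum_congr rfl (fun w _ => ?_)]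
    · rw [Finset.sum_const, card_univ, smul_eq_mul, mul_comm]
    · rw [← card_filter, count_subsets (α w) (β w) (h2 w)]
  have hpow : 2 ^ m = 4 * 2 ^ (m - 2) := by
    have h : 2 ^ m = 2 ^ 2 * 2 ^ (m - 2) := by rw [← pow_add]; congr 1; omega
    rw [h]; norm_num
  have hPcard : P.card = 2 ^ m := by
    rw [hP, card_powerset, card_univ, Fintype.card_fin]
  have hPne : P.Nonempty := ⟨∅, by simp [hP]⟩
  have hle : ∑ A ∈ P, Fintype.card 𝒲
      ≤ ∑ A ∈ P, 4 * (univ.filter (fun w => α w ∈ A ∧ β w ∉ A)).card := by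
    rw [Finset.sum_const, ← Finset.mul_sum, hsum, hPcard, hpow, smul_eq_mul]
    exact le_of_eq (by ring)
  have hex : ∃ A ∈ P, Fintype.card 𝒲 ≤ 4 * (univ.filter (fun w => α w ∈ A ∧ β w ∉ A)).card := by
    by_contra hcon
    push_neg at hcon
    have hlt : ∑ A ∈ P, 4 * (univ.filter (fun w => α w ∈ A ∧ β w ∉ A)).card
        < ∑ A ∈ P, Fintype.card 𝒲 :=
      Finset.sum_lt_sum_of_nonempty hPne (fun A hA => hcon A hA)
    exact absurd hle (not_le.mpr hlt)
  obtain ⟨A, -, hA⟩ := hex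
  exact ⟨univ.filter (fun w => α w ∈ A ∧ β w ∉ A), fun w hw w' hw' hc => by
    simp only [mem_filter] at hw hw'
    exact hw.2.2 (h1 w w' hc ▸ hw'.2.1), hA⟩
end

section
/- Converse core of Theorem 5 (limitation of fractional orthogonal scheduling and fractional partition multicast on the explicit half-rate-feasible family): Let m be a natural number, let S be a set of ordered pairs (i, j) ∈ Fin m × Fin m with i ≠ j, and let l ∈ ℕ. Suppose that for every (i, j) ∈ S, the number of elements of S whose first coordinate equals j is at most l. Then 4·|S| ≤ (l+1)·m². -/
/-- **Converse core of Theorem 5** (limitation of fractional orthogonal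
scheduling and fractional partition multicast on the explicit
half-rate-feasible family). If `S` is a set of ordered pairs `(i,j)` with
`i ≠ j` in `Fin m × Fin m` such that for every `(i,j) ∈ S` at most `l`
elements of `S` have first coordinate `j`, then `4·|S| ≤ (l+1)·m²`. -/
theorem tim_partition_multicast_pair_bound
    (m l : ℕ) (S : Finset (Fin m × Fin m))
    (hne : ∀ p ∈ S, p.1 ≠ p.2)
    (hl : ∀ p ∈ S, (S.filter (fun q => q.1 = p.2)).card ≤ l) :
    4 * S.card ≤ (l + 1) * m ^ 2 := by
  classical
  set T : Fin m → Finset (Fin m × Fin m) :=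
    fun i => S.filter (fun q => q.1 = i) with hT
  set B : Finset (Fin m) := Finset.univ.filter (fun j => l < (T j).card) with hBdef
  set b := B.card with hb
  set k := Bᶜ.card with hkdef
  have hbk : b + k = m := by
    have h := Finset.card_add_card_compl B
    rw [Fintype.card_fin] at h
    exact h
  -- second coordinates of elements of S avoid B
  have hsnd : ∀ p ∈ S, p.2 ∉ B := by
    intro p hp hmem
    have h1 := hl p hp
    have h2 : l < (T p.2).card := (Finset.mem_filter.mp hmem).2
    exact absurd h1 (not_le.mpr h2)
  -- fiber bounds
  have himg : ∀ i : Fin m, ((T i).image Prod.snd) ⊆ Bᶜ \ {i} := by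
    intro i x hx
    rcases Finset.mem_image.mp hx with ⟨q, hq, rfl⟩
    have hqS : q ∈ S := (Finset.mem_filter.mp hq).1
    have hq1 : q.1 = i := (Finset.mem_filter.mp hq).2
    refine Finset.mem_sdiff.mpr ⟨Finset.mem_compl.mpr (hsnd q hqS), ?_⟩
    simp only [Finset.mem_singleton]
    intro h
    exact hne q hqS (by rw [hq1, h])
  have hcard_img : ∀ i : Fin m, (T i).card = ((T i).image Prod.snd).card := by
    intro i
    refine (Finset.card_image_of_injOn ?_).symm
    intro p hp q hq hpq
    have hp1 : p.1 = i := (Finset.mem_filter.mp hp).2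
    have hq1 : q.1 = i := (Finset.mem_filter.mp hq).2
    exact Prod.ext (hp1.trans hq1.symm) hpq
  have hTk : ∀ i : Fin m, (T i).card ≤ k := by
    intro i
    rw [hcard_img i]
    calc ((T i).image Prod.snd).card ≤ (Bᶜ \ {i}).card :=
          Finset.card_le_card (himg i)
      _ ≤ Bᶜ.card := Finset.card_le_card (Finset.sdiff_subset)
  have hTk1 : ∀ i ∈ Bᶜ, (T i).card + 1 ≤ k := by
    intro i hi
    have hsub : {i} ⊆ Bᶜ := Finset.singleton_subset_iff.mpr hi
    have hcard : (Bᶜ \ {i}).card = k - 1 := by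
      rw [Finset.card_sdiff_of_subset hsub, Finset.card_singleton]
    have h1 : (T i).card ≤ k - 1 := by
      rw [hcard_img i, ← hcard]
      exact Finset.card_le_card (himg i)
    have hk1 : 1 ≤ k := Finset.card_pos.mpr ⟨i, hi⟩
    omega
  have hTl : ∀ i ∈ Bᶜ, (T i).card ≤ l := by
    intro i hi
    have : i ∉ B := Finset.mem_compl.mp hi
    have : ¬ l < (T i).card := fun h => this (Finset.mem_filter.mpr ⟨Finset.mem_univ i, h⟩)
    omega
  -- fiberwise count
  have hcount : S.card = ∑ i ∈ B, (T i).card + ∑ i ∈ Bᶜ, (T i).card := by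
    rw [Finset.sum_add_sum_compl]
    exact Finset.card_eq_sum_card_fiberwise (fun p _ => Finset.mem_univ p.1)
  have hsumB : ∑ i ∈ B, (T i).card ≤ b * k :=
    Finset.sum_le_card_nsmul B _ k (fun i _ => hTk i)
  by_cases hc : k ≤ l + 1
  · -- use (T i).card + 1 ≤ k on Bᶜ
    have hsumC : (∑ i ∈ Bᶜ, (T i).card) + k ≤ k * k := by
      have : ∑ i ∈ Bᶜ, ((T i).card + 1) ≤ k * k :=
        Finset.sum_le_card_nsmul Bᶜ _ k (fun i hi => hTk1 i hi)
      rwa [Finset.sum_add_distrib, Finset.sum_const, smul_eq_mul, mul_one] at this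
    have hS : S.card + k ≤ b * k + k * k := by omega
    have key : (4 : ℤ) * S.card ≤ (l + 1) * ((b : ℤ) + k) ^ 2 := by
      have hS' : (S.card : ℤ) + k ≤ (b : ℤ) * k + k * k := by exact_mod_cast hS
      have hc' : (k : ℤ) ≤ (l : ℤ) + 1 := by exact_mod_cast hc
      nlinarith [mul_nonneg (Int.natCast_nonneg k) (sq_nonneg ((b : ℤ) + k - 2)),
        mul_nonneg (sub_nonneg.mpr hc') (sq_nonneg ((b : ℤ) + k))]
    have : ((b : ℤ) + k) ^ 2 = (m : ℤ) ^ 2 := by rw [← hbk]; push_cast; ring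
    rw [this] at key
    exact_mod_cast key
  · push_neg at hc
    have hsumC : ∑ i ∈ Bᶜ, (T i).card ≤ k * l :=
      Finset.sum_le_card_nsmul Bᶜ _ l (fun i hi => hTl i hi)
    have hS : S.card ≤ b * k + k * l := by omega
    have hlk : (l : ℤ) + 1 ≤ k := by exact_mod_cast hc.le
    have key : (4 : ℤ) * S.card ≤ (l + 1) * ((b : ℤ) + k) ^ 2 := by
      have hS' : (S.card : ℤ) ≤ (b : ℤ) * k + k * l := by exact_mod_cast hS
      nlinarith [sq_nonneg ((b : ℤ) - k), sq_nonneg ((b : ℤ) + 2 * l - k),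
        mul_nonneg (Int.natCast_nonneg l) (sq_nonneg ((b : ℤ) + k - 2)),
        mul_nonneg (sub_nonneg.mpr hlk) (Int.natCast_nonneg b),
        mul_nonneg (sub_nonneg.mpr hlk) (Int.natCast_nonneg l),
        mul_nonneg (Int.natCast_nonneg b) (Int.natCast_nonneg l),
        sq_nonneg ((b : ℤ) + k - 2)]
    have : ((b : ℤ) + k) ^ 2 = (m : ℤ) ^ 2 := by rw [← hbk]; push_cast; ring
    rw [this] at key
    exact_mod_cast key
end

section
/- Converse core of Theorem 6 (limitation of fractional partition multicast on the explicit half-rate-feasible groupcast family): Let m ≥ 1 be a natural number, let W be a finite set, and let α : W → Fin m be a map each of whose fibers α⁻¹(i) has at most m−1 elements. Let S ⊆ W and l ∈ ℕ be such that for every w ∈ S and every j ∈ Fin m with j ≠ α w, the set S ∩ α⁻¹(j) has at most l elements. Then |S| ≤ (l+1)·(m−1). -/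
/-- **Converse core of Theorem 6** (limitation of fractional partition
multicast on the explicit half-rate-feasible groupcast family). If the
messages `W` are arranged into `m` alignment sets (recorded by `α`) each of
size at most `m-1`, and the active set `S` is such that for each `w ∈ S` every
alignment set other than `α w` contains at most `l` active messages, then
`|S| ≤ (l+1)·(m-1)`. -/
theorem tim_groupcast_partition_multicast_bound
    (m : ℕ) (hm : 1 ≤ m) {W : Type*} [Fintype W] [DecidableEq W]
    (α : W → Fin m)
    (hfiber : ∀ i : Fin m, (Finset.univ.filter (fun w => α w = i)).card ≤ m - 1)
    (S : Finset W) (l : ℕ)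
    (hl : ∀ w ∈ S, ∀ j : Fin m, j ≠ α w →
      (S.filter (fun w' => α w' = j)).card ≤ l) :
    S.card ≤ (l + 1) * (m - 1) := by
  rcases S.eq_empty_or_nonempty with rfl | ⟨w, hw⟩
  · simp
  have hcard : S.card = ∑ j : Fin m, (S.filter (fun w' => α w' = j)).card := by
    exact Finset.card_eq_sum_card_fiberwise (fun x _ => Finset.mem_univ (α x))
  rw [hcard, ← Finset.add_sum_erase _ _ (Finset.mem_univ (α w))]
  have h1 : (S.filter (fun w' => α w' = α w)).card ≤ m - 1 := by
    refine le_trans (Finset.card_le_card ?_) (hfiber (α w))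
    intro x hx
    simp only [Finset.mem_filter] at *
    exact ⟨Finset.mem_univ x, hx.2⟩
  have h2 : ∑ j ∈ Finset.univ.erase (α w), (S.filter (fun w' => α w' = j)).card
      ≤ (m - 1) * l := by
    calc ∑ j ∈ Finset.univ.erase (α w), (S.filter (fun w' => α w' = j)).card
        ≤ ∑ _j ∈ Finset.univ.erase (α w), l := by
          refine Finset.sum_le_sum fun j hj => hl w hw j ?_
          exact (Finset.mem_erase.mp hj).1
      _ = (m - 1) * l := by
          rw [Finset.sum_const, smul_eq_mul, Finset.card_erase_of_mem (Finset.mem_univ _),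
            Finset.card_univ, Fintype.card_fin]
  calc (S.filter (fun w' => α w' = α w)).card
        + ∑ j ∈ Finset.univ.erase (α w), (S.filter (fun w' => α w' = j)).card
      ≤ (m - 1) + (m - 1) * l := Nat.add_le_add h1 h2
    _ = (l + 1) * (m - 1) := by ring
end

section
/- Scheduling lemma in the proof of Theorem 7: Let s_1 ≥ s_2 ≥ … ≥ s_m be a nonincreasing finite sequence of positive natural numbers with sum K, and let T be a natural number with 2K ≤ T·(T+1). Then m ≤ T, or there exists an index t with 1 ≤ t ≤ min(m, T) and s_t ≤ T − t. -/
lemma tim_gauss_aux (T : ℕ) : 2 * ∑ t ∈ Finset.Icc 1 T, (T + 1 - t) = T * (T + 1) := by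
  induction T with
  | zero => simp
  | succ n ih =>
    rw [Finset.sum_Icc_succ_top (by omega)]
    have h : ∑ t ∈ Finset.Icc 1 n, (n + 1 + 1 - t) = ∑ t ∈ Finset.Icc 1 n, ((n + 1 - t) + 1) := by
      apply Finset.sum_congr rfl
      intro x hx
      simp only [Finset.mem_Icc] at hx
      omega
    rw [h, Finset.sum_add_distrib, Finset.sum_const, Nat.card_Icc]
    simp only [smul_eq_mul, mul_one]
    have : n + 1 - 1 = n := by omega
    rw [this, show n + 1 + 1 - (n + 1) = 1 from by omega]
    nlinarith [ih]

/-- **Scheduling lemma in the proof of Theorem 7.** If `s 1 ≥ s 2 ≥ … ≥ s m`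
are positive natural numbers summing to `K` and `2K ≤ T(T+1)`, then either
`m ≤ T` (all alignment sets can be sent orthogonally within `T` slots), or the
greedy algorithm stops: there is an index `t` with `1 ≤ t ≤ min m T` and
`s t ≤ T - t`. -/
theorem tim_greedy_scheduling_lemma
    (m K T : ℕ) (s : ℕ → ℕ)
    (hpos : ∀ i, 1 ≤ i → i ≤ m → 0 < s i)
    (hmono : ∀ i j, 1 ≤ i → i ≤ j → j ≤ m → s j ≤ s i)
    (hsum : ∑ i ∈ Finset.Icc 1 m, s i = K)
    (hT : 2 * K ≤ T * (T + 1)) :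
    m ≤ T ∨ ∃ t : ℕ, 1 ≤ t ∧ t ≤ min m T ∧ s t ≤ T - t := by
  by_contra h
  push_neg at h
  obtain ⟨hm, hs⟩ := h
  -- split the sum
  have hsplit : ∑ i ∈ Finset.Icc 1 m, s i
      = ∑ i ∈ Finset.Icc 1 T, s i + ∑ i ∈ Finset.Icc (T + 1) m, s i := by
    rw [show Finset.Icc 1 m = Finset.Ioc 0 m from rfl,
        show Finset.Icc 1 T = Finset.Ioc 0 T from rfl,
        Finset.Icc_add_one_left_eq_Ioc, Finset.sum_Ioc_consecutive]
    · omega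
    · omega
  have h1 : ∀ t ∈ Finset.Icc 1 T, T + 1 - t ≤ s t := by
    intro t ht
    simp only [Finset.mem_Icc] at ht
    have := hs t ht.1 (by omega)
    omega
  have h2 : ∑ t ∈ Finset.Icc 1 T, (T + 1 - t) ≤ ∑ t ∈ Finset.Icc 1 T, s t :=
    Finset.sum_le_sum h1
  have h4 : 1 ≤ ∑ i ∈ Finset.Icc (T + 1) m, s i := by
    have hmem : m ∈ Finset.Icc (T + 1) m := by simp; omega
    calc 1 ≤ s m := hpos m (by omega) le_rfl
    _ ≤ ∑ i ∈ Finset.Icc (T + 1) m, s i :=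
        Finset.single_le_sum (fun i _ => Nat.zero_le _) hmem
  have hg := tim_gauss_aux T
  omega
end

section
/- Multicast achievability along a demand-graph cycle (the necessity machinery of Theorem 8, multiple unicast): Let t : Fin K → Fin K → Bool be a K-unicast topology, and suppose there exist n ≥ 2 distinct indices j_1, …, j_n ∈ Fin K with t j_k j_{k+1} = false for every k ∈ {1, …, n} (indices read cyclically, j_{n+1} := j_1); that is, the demand graph contains a directed cycle through the messages j_1, …, j_n. Then there exist vectors v_1, …, v_n ∈ ℂ^{n−1} and covectors u_1, …, u_n ∈ ℂ^{n−1} such that for every k: the inner product of u_k with v_{k'} is 0 for every k' ≠ k with t j_k j_{k'} = true, while the inner product of u_k with v_k is nonzero. (This is a linear scheme over n−1 channel uses giving each of the n cycle messages rate 1/(n−1), so their sum rate n/(n−1) exceeds 1; consequently a K-unicast problem whose demand graph contains a cycle cannot have symmetric capacity 1/K.) -/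
open Matrix

/-- **Multicast achievability along a demand-graph cycle** (the necessity
machinery of Theorem 8, multiple unicast). If the demand graph of a
`K`-unicast topology `t` contains a directed cycle through `n ≥ 2` distinct
messages `j 0, …, j (n-1)` — i.e. `t (j k) (j (k+1)) = false` cyclically —
then there is a linear scheme over `n-1` channel uses serving each of the `n`
cycle messages one symbol: vectors `v k` and covectors `u k` in `ℂ^{n-1}` such
that `u k` annihilates the precoding vector of every other cycle message heard
by destination `j k` while recovering its own. -/
theorem tim_demand_cycle_multicast
    (K n : ℕ) (hn : 2 ≤ n) (t : Fin K → Fin K → Bool)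
    (j : Fin n → Fin K) (hinj : Function.Injective j)
    (hcyc : haveI : NeZero n := ⟨by omega⟩
      ∀ k : Fin n, t (j k) (j (k + 1)) = false) :
    ∃ (v : Fin n → (Fin (n - 1) → ℂ)) (u : Fin n → (Fin (n - 1) → ℂ)),
      ∀ k : Fin n,
        (∀ k' : Fin n, k' ≠ k → t (j k) (j k') = true → u k ⬝ᵥ v k' = 0) ∧
        u k ⬝ᵥ v k ≠ 0 := by
  classical
  haveI : NeZero n := ⟨by omega⟩
  -- distinct complex nodes
  set c : Fin n → ℂ := fun m => ((m : ℕ) : ℂ) with hc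
  have hcinj : Function.Injective c := by
    intro a b hab
    have : (a : ℕ) = (b : ℕ) := Nat.cast_injective hab
    exact Fin.ext this
  -- the "other heard messages" index set
  set S : Fin n → Finset (Fin n) := fun k => (Finset.univ.erase k).erase (k + 1) with hS
  have hk1 : ∀ k : Fin n, k + 1 ≠ k := by
    intro k h
    have h1 : (1 : Fin n) = 0 := by
      have := congrArg (fun x => x - k) h
      simpa using this
    rw [Fin.one_eq_zero_iff] at h1
    omega
  have hScard : ∀ k : Fin n, (S k).card = n - 2 := by
    intro k
    have h1 : (Finset.univ.erase k).card = n - 1 := by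
      rw [Finset.card_erase_of_mem (Finset.mem_univ k)]
      simp
    have h2 : (k + 1) ∈ Finset.univ.erase k := by
      simp [Finset.mem_erase, hk1 k]
    rw [hS]
    rw [Finset.card_erase_of_mem h2, h1]
    omega
  set p : Fin n → Polynomial ℂ := fun k => ∏ m ∈ S k, (Polynomial.X - Polynomial.C (c m))
    with hp
  have hdeg : ∀ k : Fin n, (p k).natDegree < n - 1 := by
    intro k
    have : (p k).natDegree = (S k).card := by
      rw [hp]
      rw [Polynomial.natDegree_prod _ _ (fun m _ => Polynomial.X_sub_C_ne_zero (c m))]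
      simp [Polynomial.natDegree_X_sub_C]
    rw [this, hScard k]
    omega
  refine ⟨fun k i => c k ^ (i : ℕ), fun k i => (p k).coeff i, ?_⟩
  have key : ∀ k k' : Fin n,
      (fun i : Fin (n - 1) => (p k).coeff i) ⬝ᵥ (fun i : Fin (n - 1) => c k' ^ (i : ℕ)) = (p k).eval (c k') := by
    intro k k'
    rw [Polynomial.eval_eq_sum_range' (hdeg k)]
    show ∑ i : Fin (n - 1), (p k).coeff i * c k' ^ (i : ℕ) = _
    exact Fin.sum_univ_eq_sum_range (fun i => (p k).coeff i * c k' ^ i) (n - 1)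
  intro k
  constructor
  · intro k' hne htrue
    have hne1 : k' ≠ k + 1 := by
      intro h; rw [h] at htrue; rw [hcyc k] at htrue; exact Bool.false_ne_true htrue
    have hmem : k' ∈ S k := by simp [hS, Finset.mem_erase, hne, hne1]
    rw [key k k', hp]
    simp only [Polynomial.eval_prod]
    exact Finset.prod_eq_zero hmem (by simp)
  · rw [key k k, hp]
    simp only [Polynomial.eval_prod]
    rw [Finset.prod_ne_zero_iff]
    intro m hm
    have hmk : m ≠ k := by
      rw [hS] at hm
      exact (Finset.mem_erase.mp (Finset.mem_of_mem_erase hm)).1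
    simp only [Polynomial.eval_sub, Polynomial.eval_X, Polynomial.eval_C, sub_ne_zero]
    exact fun h => hmk (hcinj h.symm)
end

section
/- Observation in the proof of Theorem 8 (groupcast): Consider a groupcast TIM instance over ℂ with K ≥ 2 messages, each message k ∈ Fin K originating at its own source k; destinations indexed by a finite set D, each destination d ∈ D desiring a single message des(d) ∈ Fin K; and topology t : D → Fin K → Bool. Suppose every destination has at least one antidote: for every d ∈ D there is some k ≠ des(d) with t d k = false. Then there exist vectors v_1, …, v_K ∈ ℂ^{K−1} and, for each destination d, a covector u_d ∈ ℂ^{K−1} such that the inner product of u_d with v_k is 0 for every k ≠ des(d) with t d k = true, and the inner product of u_d with v_{des(d)} is nonzero. (This is a linear multicast scheme over K−1 channel uses achieving symmetric rate 1/(K−1) > 1/K; hence a K-groupcast problem with symmetric capacity exactly 1/K must have a destination with no antidotes.) -/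
open Matrix

/-- **Observation in the proof of Theorem 8 (groupcast).** In a groupcast TIM
instance over `ℂ` with `K ≥ 2` messages in which every destination has at
least one antidote (some undesired source it cannot hear), there is a linear
multicast scheme over `K - 1` channel uses: precoding vectors `v k ∈ ℂ^{K-1}`
and, for each destination `d`, a combining covector `u d` annihilating the
precoding vectors of all heard undesired messages while recovering the desired
one. Hence such an instance has symmetric rate at least `1/(K-1) > 1/K`. -/
theorem tim_groupcast_antidote_multicast
    (K : ℕ) (hK : 2 ≤ K) {D : Type*} [Fintype D]
    (des : D → Fin K) (t : D → Fin K → Bool)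
    (hantidote : ∀ d : D, ∃ k : Fin K, k ≠ des d ∧ t d k = false) :
    ∃ (v : Fin K → (Fin (K - 1) → ℂ)) (u : D → (Fin (K - 1) → ℂ)),
      ∀ d : D,
        (∀ k : Fin K, k ≠ des d → t d k = true → u d ⬝ᵥ v k = 0) ∧
        u d ⬝ᵥ v (des d) ≠ 0 := by
  -- Vandermonde precoding vectors
  set v : Fin K → (Fin (K - 1) → ℂ) := fun k j => ((k : ℕ) : ℂ) ^ (j : ℕ) with hv
  -- For each destination, construct the combining covector
  have key : ∀ d : D, ∃ u : Fin (K - 1) → ℂ,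
      (∀ k : Fin K, k ≠ des d → t d k = true → u ⬝ᵥ v k = 0) ∧
      u ⬝ᵥ v (des d) ≠ 0 := by
    intro d
    obtain ⟨k0, hk0ne, hk0t⟩ := hantidote d
    -- the messages other than k0
    have hcard : Fintype.card {k : Fin K // k ≠ k0} = K - 1 := by
      have := Fintype.card_subtype_compl (fun k : Fin K => k = k0)
      simpa [Fintype.card_subtype_eq] using this
    let e : Fin (K - 1) ≃ {k : Fin K // k ≠ k0} :=
      (Fintype.equivFinOfCardEq hcard).symm
    -- node function
    let w : Fin (K - 1) → ℂ := fun i => (((e i : Fin K) : ℕ) : ℂ)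
    have hwinj : Function.Injective w := by
      intro a b hab
      have : ((e a : Fin K) : ℕ) = ((e b : Fin K) : ℕ) :=
        Nat.cast_injective (R := ℂ) hab
      exact e.injective (Subtype.ext (Fin.ext this))
    have hdet : (Matrix.vandermonde w).det ≠ 0 :=
      Matrix.det_vandermonde_ne_zero_iff.mpr hwinj
    have hunit : IsUnit (Matrix.vandermonde w).det := Ne.isUnit hdet
    set M := Matrix.vandermonde w with hM
    let j0 : Fin (K - 1) := e.symm ⟨des d, fun h => hk0ne h.symm⟩
    set u : Fin (K - 1) → ℂ := M⁻¹ *ᵥ Pi.single j0 1 with hu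
    have hMu : M *ᵥ u = Pi.single j0 1 := by
      rw [hu, Matrix.mulVec_mulVec, Matrix.mul_nonsing_inv _ hunit, Matrix.one_mulVec]
    -- u ⬝ᵥ v k for k ≠ k0
    have hdot : ∀ (k : Fin K) (hk : k ≠ k0),
        u ⬝ᵥ v k = (Pi.single j0 1 : Fin (K-1) → ℂ) (e.symm ⟨k, hk⟩) := by
      intro k hk
      have hrow : v k = fun j => M (e.symm ⟨k, hk⟩) j := by
        funext j
        simp [hv, hM, Matrix.vandermonde, w, e.apply_symm_apply]
      rw [hrow, dotProduct_comm]
      have : (fun j => M (e.symm ⟨k, hk⟩) j) ⬝ᵥ u = (M *ᵥ u) (e.symm ⟨k, hk⟩) := rfl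
      rw [this, hMu]
    refine ⟨u, ?_, ?_⟩
    · intro k hkdes hkt
      have hk : k ≠ k0 := by
        intro h; rw [h, hk0t] at hkt; exact Bool.noConfusion hkt
      rw [hdot k hk]
      have : e.symm ⟨k, hk⟩ ≠ j0 := by
        intro h
        apply hkdes
        have := e.symm.injective h
        exact congrArg Subtype.val this
      simp [Pi.single_eq_of_ne this]
    · have hdes : des d ≠ k0 := fun h => hk0ne h.symm
      rw [hdot (des d) hdes]
      have : e.symm ⟨des d, hdes⟩ = j0 := rfl
      rw [this]
      simp
  choose u hu1 hu2 using key
  exact ⟨v, u, fun d => ⟨hu1 d, hu2 d⟩⟩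
end

section
/- Invariance of the minimum internal conflict distance under duality (the key step in the proof of Theorem 13): Let t : Fin K → Fin K → Bool be a K-unicast topology and let tᵀ be the dual topology, tᵀ i j := t j i. Then: (a) if (i, j) is an internal conflict of tᵀ whose conflict distance in the alignment graph G(tᵀ) is d, then t has an internal conflict whose conflict distance in G(t) is at most d; consequently (b) t has an internal conflict if and only if tᵀ does, and when they do, the minimum conflict distance over all internal conflicts of t equals the minimum conflict distance over all internal conflicts of tᵀ. -/
/-- The alignment graph of a `K`-unicast topology: messages `i ≠ j` are
adjacent iff some destination `k` (`k ≠ i, j`) hears both their sources. -/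
def alignmentGraph (K : ℕ) (t : Fin K → Fin K → Bool) : SimpleGraph (Fin K) :=
  SimpleGraph.fromRel (fun i j =>
    ∃ k : Fin K, k ≠ i ∧ k ≠ j ∧ t k i = true ∧ t k j = true)

/-- `(i, j)` is an internal conflict of the `K`-unicast topology `t`:
destination `i` hears source `j ≠ i`, and `i, j` lie in the same connected
component of the alignment graph. -/
def IsInternalConflict (K : ℕ) (t : Fin K → Fin K → Bool) (i j : Fin K) : Prop :=
  i ≠ j ∧ t i j = true ∧ (alignmentGraph K t).Reachable i j

lemma ag_adj {K : ℕ} {s : Fin K → Fin K → Bool} {u v : Fin K} :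
    (alignmentGraph K s).Adj u v ↔
      u ≠ v ∧ ∃ k, k ≠ u ∧ k ≠ v ∧ s k u = true ∧ s k v = true := by
  simp only [alignmentGraph, SimpleGraph.fromRel_adj]
  constructor
  · rintro ⟨hne, ⟨k, h1, h2, h3, h4⟩ | ⟨k, h1, h2, h3, h4⟩⟩
    · exact ⟨hne, k, h1, h2, h3, h4⟩
    · exact ⟨hne, k, h2, h1, h4, h3⟩
  · rintro ⟨hne, k, h1, h2, h3, h4⟩
    exact ⟨hne, Or.inl ⟨k, h1, h2, h3, h4⟩⟩

lemma tim_key_s14 {K : ℕ} (t : Fin K → Fin K → Bool) :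
    ∀ {i j : Fin K} (p : (alignmentGraph K (fun a b => t b a)).Walk i j),
      1 ≤ p.length →
      ∃ a b : Fin K, a ≠ i ∧ b ≠ j ∧ t i a = true ∧ t j b = true ∧
        ∃ q : (alignmentGraph K t).Walk a b, q.length + 1 ≤ p.length := by
  intro i j p
  induction p with
  | nil => intro h; simp at h
  | @cons i w j h q ih =>
    intro _
    obtain ⟨hne, k, hki, hkw, hti, htw⟩ := ag_adj.mp h
    have hti' : t i k = true := hti
    have htw' : t w k = true := htw
    rcases Nat.eq_zero_or_pos q.length with hq0 | hq1
    · have hwj : w = j := SimpleGraph.Walk.eq_of_length_eq_zero hq0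
      subst hwj
      refine ⟨k, k, hki, hkw, hti', htw', SimpleGraph.Walk.nil, ?_⟩
      simp [SimpleGraph.Walk.length_cons]
    · obtain ⟨a', b', ha'w, hb'j, hwa', hjb', q', hq'⟩ := ih hq1
      by_cases hka : k = a'
      · subst hka
        refine ⟨k, b', hki, hb'j, hti', hjb', q', ?_⟩
        simp only [SimpleGraph.Walk.length_cons]
        omega
      · have hadj : (alignmentGraph K t).Adj k a' :=
          ag_adj.mpr ⟨hka, w, hkw.symm, fun h => ha'w h.symm, htw', hwa'⟩
        refine ⟨k, b', hki, hb'j, hti', hjb', SimpleGraph.Walk.cons hadj q', ?_⟩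
        simp only [SimpleGraph.Walk.length_cons]
        omega

lemma tim_partA {K : ℕ} (t : Fin K → Fin K → Bool) (i j : Fin K) (d : ℕ)
    (hc : IsInternalConflict K (fun a b => t b a) i j)
    (hd : (alignmentGraph K (fun a b => t b a)).dist i j = d) :
    ∃ i' j' : Fin K, IsInternalConflict K t i' j' ∧
      (alignmentGraph K t).dist i' j' ≤ d := by
  obtain ⟨hij, htji, hreach⟩ := hc
  have htji' : t j i = true := htji
  obtain ⟨p, hp⟩ := hreach.exists_walk_length_eq_dist
  rw [hd] at hp
  have hd1 : 1 ≤ p.length := by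
    rcases Nat.eq_zero_or_pos p.length with h0 | h1
    · exact absurd (SimpleGraph.Walk.eq_of_length_eq_zero h0) hij
    · exact h1
  obtain ⟨a, b, hai, hbj, hia, hjb, q, hq⟩ := tim_key_s14 t p hd1
  by_cases hbi : b = i
  · subst hbi
    refine ⟨b, a, ⟨fun h => hai h.symm, hia, ⟨q.reverse⟩⟩, ?_⟩
    calc (alignmentGraph K t).dist b a ≤ q.reverse.length :=
          SimpleGraph.dist_le _
      _ ≤ d := by rw [SimpleGraph.Walk.length_reverse]; omega
  · have hadj : (alignmentGraph K t).Adj i b :=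
      ag_adj.mpr ⟨fun h => hbi h.symm, j, fun h => hij h.symm, fun h => hbj h.symm,
        htji', hjb⟩
    refine ⟨i, a, ⟨fun h => hai h.symm, hia, ⟨SimpleGraph.Walk.cons hadj q.reverse⟩⟩, ?_⟩
    calc (alignmentGraph K t).dist i a ≤ (SimpleGraph.Walk.cons hadj q.reverse).length :=
          SimpleGraph.dist_le _
      _ ≤ d := by
          simp only [SimpleGraph.Walk.length_cons, SimpleGraph.Walk.length_reverse]
          omega

/-- **Invariance of the minimum internal conflict distance under duality** (key
step in the proof of Theorem 13). (a) An internal conflict of the dual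
topology `tᵀ` at conflict distance `d` yields an internal conflict of `t` at
conflict distance at most `d`; consequently (b) `t` has an internal conflict
iff `tᵀ` does, and then the minimum conflict distances coincide. -/
theorem tim_dual_min_conflict_distance (K : ℕ) (t : Fin K → Fin K → Bool) :
    -- (a)
    (∀ (i j : Fin K) (d : ℕ),
        IsInternalConflict K (fun a b => t b a) i j →
        (alignmentGraph K (fun a b => t b a)).dist i j = d →
        ∃ i' j' : Fin K, IsInternalConflict K t i' j' ∧
          (alignmentGraph K t).dist i' j' ≤ d) ∧
    -- (b)
    ((∃ i j : Fin K, IsInternalConflict K t i j) ↔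
      (∃ i j : Fin K, IsInternalConflict K (fun a b => t b a) i j)) ∧
    ((∃ i j : Fin K, IsInternalConflict K t i j) →
      sInf {d : ℕ | ∃ i j : Fin K, IsInternalConflict K t i j ∧
              (alignmentGraph K t).dist i j = d}
        = sInf {d : ℕ | ∃ i j : Fin K, IsInternalConflict K (fun a b => t b a) i j ∧
              (alignmentGraph K (fun a b => t b a)).dist i j = d}) := by
  have partA := tim_partA t
  have partA' := tim_partA (fun a b => t b a)
  refine ⟨fun i j d hc hd => partA i j d hc hd, ?_, ?_⟩
  · constructor
    · rintro ⟨i, j, hc⟩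
      obtain ⟨i', j', hc', _⟩ := partA' i j _ hc rfl
      exact ⟨i', j', hc'⟩
    · rintro ⟨i, j, hc⟩
      obtain ⟨i', j', hc', _⟩ := partA i j _ hc rfl
      exact ⟨i', j', hc'⟩
  · rintro ⟨i, j, hc⟩
    have hSt : {d : ℕ | ∃ i j : Fin K, IsInternalConflict K t i j ∧
        (alignmentGraph K t).dist i j = d}.Nonempty :=
      ⟨_, i, j, hc, rfl⟩
    obtain ⟨i₂, j₂, hc₂, _⟩ := partA' i j _ hc rfl
    have hSd : {d : ℕ | ∃ i j : Fin K, IsInternalConflict K (fun a b => t b a) i j ∧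
        (alignmentGraph K (fun a b => t b a)).dist i j = d}.Nonempty :=
      ⟨_, i₂, j₂, hc₂, rfl⟩
    apply le_antisymm
    · obtain ⟨i', j', hc', hd'⟩ := Nat.sInf_mem hSd
      obtain ⟨i'', j'', hc'', hle⟩ := partA i' j' _ hc' hd'
      exact le_trans (Nat.sInf_le ⟨i'', j'', hc'', rfl⟩) hle
    · obtain ⟨i', j', hc', hd'⟩ := Nat.sInf_mem hSt
      obtain ⟨i'', j'', hc'', hle⟩ := partA' i' j' _ hc' hd'
      exact le_trans (Nat.sInf_le ⟨i'', j'', hc'', rfl⟩) hle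
end

section
/- Cyclic subspace assignment in the proof of Theorem 11 (alignment sets that are cycles without forks): For all integers Δ ≥ 1 and l ≥ 2Δ, there exist ℂ-linear subspaces E_1, …, E_l of ℂ^{2Δ+1}, each of dimension Δ, such that, reading indices modulo l: (i) dim(E_k + E_{k+1}) ≤ Δ + 1 for every k; (ii) E_j ∩ E_k = {0} whenever the cyclic distance min(|j−k|, l−|j−k|) between j and k is at least Δ; and (iii) E_w ∩ (E_u + E_{u+1}) = {0} whenever both cyclic distances from w to u and from w to u+1 are at least Δ. -/
/-!
The points `(1, t, …, t ^ (2Δ))` of the moment curve in `ℂ^{2Δ+1}` at the nodes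
`t = 0, …, l - 1` are in general position: by Vandermonde, any `2Δ + 1` of them are
linearly independent.
Let `E k` be spanned by the `Δ` points of the cyclic window `k, …, k + Δ - 1`. Two adjacent
windows cover only `Δ + 1` points, which gives (i). Windows starting at cyclic distance at least
`Δ` are disjoint, and the window of `w` in (iii) misses both windows of `u` and `u + 1`; as at
most `2Δ + 1` points are involved, the spans of disjoint sets of them meet only in `0`.
-/

open Finset Function Submodule Module

section LinearAlgebra

variable {ι R M : Type*} [Ring R] [AddCommGroup M] [Module R M]

theorem finrank_span_image_le_card [StrongRankCondition R] (v : ι → M) (s : Finset ι) :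
    finrank R (span R (v '' s)) ≤ #s := by
  rw [Set.image_eq_range]
  exact (finrank_range_le_card (R := R) (fun i : s => v i)).trans_eq (Fintype.card_coe s)

theorem LinearIndepOn.finrank_span_image_eq_card [StrongRankCondition R] [Nontrivial R]
    {v : ι → M} {s : Finset ι} (hv : LinearIndepOn R v (s : Set ι)) :
    finrank R (span R (v '' s)) = #s := by
  rw [Set.image_eq_range]
  simpa using finrank_span_eq_card hv.linearIndependent

theorem LinearIndepOn.span_image_inf_span_image_eq_bot [DecidableEq ι] {v : ι → M}
    {s t : Finset ι} (hv : LinearIndepOn R v ↑(s ∪ t)) (hst : Disjoint s t) :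
    span R (v '' s) ⊓ span R (v '' t) = ⊥ := by
  rw [coe_union] at hv
  exact ((linearIndepOn_union_iff (disjoint_coe.2 hst)).1 hv).2.2.eq_bot

end LinearAlgebra

section Vandermonde

variable {K : Type*} [Field K]

theorem linearIndependent_pow_of_injective {n N : ℕ} (hn : n ≤ N) {x : Fin n → K}
    (hx : Injective x) : LinearIndependent K (fun i (j : Fin N) => x i ^ (j : ℕ)) := by
  have hrows : LinearIndependent K (Matrix.vandermonde x).row :=
    Matrix.linearIndependent_rows_iff_isUnit.2 <|
      (Matrix.isUnit_iff_isUnit_det _).2 (Matrix.det_vandermonde_ne_zero_iff.2 hx).isUnit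
  refine .of_comp (LinearMap.funLeft K K (Fin.castLE hn)) ?_
  convert hrows
  ext i j
  simp [Matrix.vandermonde_apply, LinearMap.funLeft_apply]

theorem linearIndepOn_pow_of_card_le {ι : Type*} {N : ℕ} {x : ι → K} {s : Finset ι}
    (hx : Set.InjOn x s) (hs : #s ≤ N) :
    LinearIndepOn K (fun i (j : Fin N) => x i ^ (j : ℕ)) s := by
  have := linearIndependent_pow_of_injective (N := N) hs
    ((Set.injOn_iff_injective.1 hx).comp s.equivFin.symm.injective)
  exact (linearIndependent_equiv s.equivFin.symm).1 this

end Vandermonde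

namespace Fin

variable {l : ℕ}

-- The cyclic interval `{k, k + 1, …, k + m - 1}` of `Fin l`.
def cyclicWindow (k : Fin l) (m : ℕ) : Finset (Fin l) := {i | ((i - k : Fin l) : ℕ) < m}

@[simp]
theorem mem_cyclicWindow {k i : Fin l} {m : ℕ} :
    i ∈ cyclicWindow k m ↔ ((i - k : Fin l) : ℕ) < m := by
  simp [cyclicWindow]

variable [NeZero l]

theorem card_cyclicWindow (k : Fin l) (m : ℕ) : #(cyclicWindow k m) = min l m := by
  rw [← card_filter_val_lt]
  refine card_nbij' (· - k) (· + k) ?_ ?_ ?_ ?_ <;> intro i <;> simp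

theorem cyclicWindow_succ_subset (k : Fin l) (m : ℕ) :
    cyclicWindow (k + 1) m ⊆ cyclicWindow k (m + 1) := by
  intro i
  simp only [mem_cyclicWindow]
  have : i - k = (i - (k + 1)) + 1 := by abel
  rw [this, val_add, val_one']
  intro h
  have := Nat.mod_le ((i - (k + 1) : Fin l) + 1 % l) l
  have := Nat.mod_le 1 l
  omega

theorem card_cyclicWindow_union_succ_le (k : Fin l) (m : ℕ) :
    #(cyclicWindow k m ∪ cyclicWindow (k + 1) m) ≤ m + 1 := by
  calc _ ≤ #(cyclicWindow k (m + 1)) :=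
        card_le_card (union_subset (fun i => by simp only [mem_cyclicWindow]; omega)
          (cyclicWindow_succ_subset k m))
    _ ≤ m + 1 := (card_cyclicWindow k _).trans_le (min_le_right _ _)

theorem disjoint_cyclicWindow {j k : Fin l} {m m' : ℕ} (hjk : m ≤ ((k - j : Fin l) : ℕ))
    (hkj : m' ≤ ((j - k : Fin l) : ℕ)) : Disjoint (cyclicWindow j m) (cyclicWindow k m') := by
  refine disjoint_left.2 fun i hij hik => ?_
  rw [mem_cyclicWindow] at hij hik
  rcases le_total (i - k) (i - j) with h | h
  · have : k - j = (i - j) - (i - k) := by abel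
    rw [this, sub_val_of_le h] at hjk
    omega
  · have : j - k = (i - k) - (i - j) := by abel
    rw [this, sub_val_of_le h] at hkj
    omega

theorem min_dist_sub_dist_eq_min_val_sub (j k : Fin l) :
    min (Nat.dist j k) (l - Nat.dist j k) =
      min ((j - k : Fin l) : ℕ) ((k - j : Fin l) : ℕ) := by
  unfold Nat.dist
  rcases lt_trichotomy j k with h | rfl | h
  · rw [coe_sub_iff_lt.2 h, sub_val_of_le h.le]
    have := k.isLt
    rw [lt_def] at h
    omega
  · simp
  · rw [coe_sub_iff_lt.2 h, sub_val_of_le h.le]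
    have := j.isLt
    rw [lt_def] at h
    omega

theorem disjoint_cyclicWindow_of_le_min_dist {j k : Fin l} {m : ℕ}
    (h : m ≤ min (Nat.dist j k) (l - Nat.dist j k)) :
    Disjoint (cyclicWindow j m) (cyclicWindow k m) := by
  rw [min_dist_sub_dist_eq_min_val_sub, le_min_iff] at h
  exact disjoint_cyclicWindow h.2 h.1

end Fin

open Fin

/-- **Cyclic subspace assignment in the proof of Theorem 11** (alignment sets
that are cycles without forks). For `Δ ≥ 1` and `l ≥ 2Δ` there are
`Δ`-dimensional subspaces `E 1, …, E l` of `ℂ^{2Δ+1}` such that, cyclically: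
(i) adjacent subspaces together span at most `Δ+1` dimensions;
(ii) subspaces at cyclic distance at least `Δ` intersect trivially; and
(iii) a subspace at cyclic distance at least `Δ` from both `u` and `u+1`
intersects `E u + E (u+1)` trivially. -/
theorem tim_cyclic_subspace_assignment (Δ l : ℕ) (hΔ : 1 ≤ Δ) (hl : 2 * Δ ≤ l) :
    haveI : NeZero l := ⟨by omega⟩
    ∃ E : Fin l → Submodule ℂ (Fin (2 * Δ + 1) → ℂ),
      (∀ k : Fin l, Module.finrank ℂ (E k) = Δ) ∧
      -- (i)
      (∀ k : Fin l, Module.finrank ℂ ↥(E k ⊔ E (k + 1)) ≤ Δ + 1) ∧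
      -- (ii)
      (∀ j k : Fin l,
        Δ ≤ min (Nat.dist (j : ℕ) (k : ℕ)) (l - Nat.dist (j : ℕ) (k : ℕ)) →
        E j ⊓ E k = ⊥) ∧
      -- (iii)
      (∀ w u : Fin l,
        Δ ≤ min (Nat.dist (w : ℕ) (u : ℕ)) (l - Nat.dist (w : ℕ) (u : ℕ)) →
        Δ ≤ min (Nat.dist (w : ℕ) ((u + 1 : Fin l) : ℕ))
              (l - Nat.dist (w : ℕ) ((u + 1 : Fin l) : ℕ)) →
        E w ⊓ (E u ⊔ E (u + 1)) = ⊥) := by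
  have : NeZero l := ⟨by omega⟩
  let v (i : Fin l) (j : Fin (2 * Δ + 1)) : ℂ := ((i : ℕ) : ℂ) ^ (j : ℕ)
  have hv {s : Finset (Fin l)} (hs : #s ≤ 2 * Δ + 1) : LinearIndepOn ℂ v s :=
    linearIndepOn_pow_of_card_le (Nat.cast_injective.comp Fin.val_injective).injOn hs
  have hsup (k : Fin l) :
      span ℂ (v '' cyclicWindow k Δ) ⊔ span ℂ (v '' cyclicWindow (k + 1) Δ) =
        span ℂ (v '' ↑(cyclicWindow k Δ ∪ cyclicWindow (k + 1) Δ)) := by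
    rw [coe_union, Set.image_union, span_union]
  refine ⟨fun k => span ℂ (v '' cyclicWindow k Δ), fun k => ?_, fun k => ?_,
    fun j k hjk => ?_, fun w u hwu hwu₁ => ?_⟩
  · rw [(hv ((card_cyclicWindow k Δ).trans_le (by omega))).finrank_span_image_eq_card,
      card_cyclicWindow, min_eq_right (by omega)]
  · rw [hsup]
    exact (finrank_span_image_le_card v _).trans (card_cyclicWindow_union_succ_le k Δ)
  · refine (hv ?_).span_image_inf_span_image_eq_bot (disjoint_cyclicWindow_of_le_min_dist hjk)
    grw [card_union_le, card_cyclicWindow, card_cyclicWindow]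
    omega
  · rw [hsup]
    refine (hv ?_).span_image_inf_span_image_eq_bot
      (disjoint_union_right.2 ⟨disjoint_cyclicWindow_of_le_min_dist hwu,
        disjoint_cyclicWindow_of_le_min_dist hwu₁⟩)
    grw [card_union_le, card_cyclicWindow_union_succ_le, card_cyclicWindow]
    omega
end

section
/- Tree subspace assignment in the proof of Theorem 11 (alignment sets without cycles): For every integer Δ ≥ 1 and every finite tree T = (V, E) (a finite connected acyclic simple graph) with graph distance d, there exists an assignment of a Δ-dimensional ℂ-linear subspace E_v ⊆ ℂ^{2Δ+1} to each vertex v ∈ V such that: (i) dim(E_u ∩ E_v) ≥ Δ − d(u, v) for all vertices u, v (in particular adjacent vertices' subspaces overlap in at least Δ−1 dimensions); and (ii) for all vertices w, u, v with u and v adjacent or equal, if d(w, u) ≥ Δ and d(w, v) ≥ Δ then E_w ∩ (E_u + E_v) = {0}. -/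
/-!
Root the tree and add the vertices one leaf at a time. A new leaf `z` with parent `p` receives
`E z = H ⊔ K ∙ x`, where `H` is a hyperplane of `E p` containing none of the nonzero subspaces
`E p ⊓ (E u ⊔ E v)` (`u`, `v` adjacent or equal), and `x` is a generic vector. What propagates
along the tree is the bound `dim (E w ⊓ (E u ⊔ E v)) ≤ Δ - min (d w u) (d w v)`: moving from `p`
to `z`, the hyperplane loses one dimension in each of these intersections, while `x`, avoiding
the subspaces `H ⊔ E u ⊔ E v` and `E w ⊔ E p` (of dimension at most `2Δ < 2Δ + 1`), adds none.
Property (i) follows by chaining `dim (E u ⊓ E v) ≥ Δ - 1` along a geodesic.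
-/

open Module

namespace Submodule

variable {K W : Type*} [Field K] [AddCommGroup W] [Module K W]

theorem exists_forall_notMem_of_ne_top [Infinite K] {ι : Type*} [Finite ι]
    {p : ι → Submodule K W} (hp : ∀ i, p i ≠ ⊤) : ∃ x, ∀ i, x ∉ p i := by
  by_contra! h
  obtain ⟨i, hi⟩ := Subspace.exists_eq_top_of_iUnion_eq_univ (p := p) <|
    Set.eq_univ_of_forall fun x ↦ Set.mem_iUnion.mpr (h x)
  exact hp i hi

theorem sup_span_singleton_inf_eq_inf {H F : Submodule K W} {x : W} (hx : x ∉ H ⊔ F) :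
    (H ⊔ K ∙ x) ⊓ F = H ⊓ F := by
  have hdisj : (K ∙ x) ⊓ (H ⊔ F) = ⊥ :=
    (disjoint_span_singleton_of_notMem hx).symm.eq_bot
  have hmod : (H ⊔ K ∙ x) ⊓ (H ⊔ F) = H := by
    rw [sup_inf_assoc_of_le (K ∙ x) (le_sup_left : H ≤ H ⊔ F), hdisj, sup_bot_eq]
  calc (H ⊔ K ∙ x) ⊓ F = (H ⊔ K ∙ x) ⊓ (H ⊔ F) ⊓ F := by
        rw [inf_assoc, inf_eq_right.mpr (le_sup_right : F ≤ H ⊔ F)]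
    _ = H ⊓ F := by rw [hmod]

variable [FiniteDimensional K W]

theorem finrank_inf_add_finrank_inf_le (A B C : Submodule K W) :
    finrank K ↥(A ⊓ B) + finrank K ↥(B ⊓ C) ≤ finrank K B + finrank K ↥(A ⊓ C) := by
  have hsup := finrank_mono (sup_le (inf_le_right : A ⊓ B ≤ B) (inf_le_left : B ⊓ C ≤ B))
  have hinf := finrank_mono (le_inf (inf_le_left.trans inf_le_left)
    (inf_le_right.trans inf_le_right) : A ⊓ B ⊓ (B ⊓ C) ≤ A ⊓ C)
  have := finrank_sup_add_finrank_inf_eq (A ⊓ B) (B ⊓ C)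
  omega

theorem exists_hyperplane_forall_not_le [Infinite K] {ι : Type*} [Finite ι]
    {P : Submodule K W} (hP : P ≠ ⊥) {U : ι → Submodule K W} (hU : ∀ i, U i ≠ ⊥) :
    ∃ H ≤ P, finrank K H + 1 = finrank K P ∧ ∀ i, ¬U i ≤ H := by
  obtain ⟨φ, hφ⟩ := exists_forall_notMem_of_ne_top
    (p := fun i : Option ι ↦ (i.elim P U).dualAnnihilator)
    (by rintro (_ | i) <;> simp [hP, hU])
  have hφ' : ∀ {U : Submodule K W}, φ ∉ U.dualAnnihilator → ∃ u ∈ U, φ u ≠ 0 := by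
    simp [mem_dualAnnihilator]
  have hψ : φ ∘ₗ P.subtype ≠ 0 := by
    obtain ⟨u, hu, hφu⟩ := hφ' (hφ none)
    exact fun h ↦ hφu (LinearMap.congr_fun h ⟨u, hu⟩)
  refine ⟨(LinearMap.ker (φ ∘ₗ P.subtype)).map P.subtype, map_subtype_le _ _, ?_, fun i hle ↦ ?_⟩
  · rw [finrank_map_subtype_eq]
    exact Dual.finrank_ker_add_one_of_ne_zero hψ
  · obtain ⟨u, hu, hφu⟩ := hφ' (hφ (some i))
    obtain ⟨y, hy, rfl⟩ := mem_map.mp (hle hu)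
    exact hφu hy

theorem exists_generic_child [Infinite K] {ι κ : Type*} [Finite ι] [Finite κ] {Δ : ℕ}
    (hΔ : 1 ≤ Δ) (hW : 2 * Δ < finrank K W) {P : Submodule K W} (hP : finrank K P = Δ)
    {S : ι → Submodule K W} (hS : ∀ i, finrank K (S i) ≤ Δ + 1)
    {T : κ → Submodule K W} (hT : ∀ j, finrank K (T j) ≤ Δ) :
    ∃ F : Submodule K W, finrank K F = Δ ∧ Δ - 1 ≤ finrank K ↥(F ⊓ P) ∧
      (∀ i, finrank K ↥(F ⊓ S i) ≤ finrank K ↥(P ⊓ S i) - 1) ∧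
      ∀ j, T j ⊓ (F ⊔ P) = T j ⊓ P := by
  obtain ⟨H, hHP, hH, hcut⟩ := exists_hyperplane_forall_not_le
    (P := P) (by rintro rfl; simp at hP; omega) (U := fun i : {i // P ⊓ S i ≠ ⊥} ↦ P ⊓ S i)
    (fun i ↦ i.2)
  have hne_top : ∀ A : Submodule K W, finrank K A ≤ 2 * Δ → A ≠ ⊤ := by
    rintro A hA rfl
    rw [finrank_top] at hA
    omega
  obtain ⟨x, hx⟩ := exists_forall_notMem_of_ne_top
    (p := fun i : Option (ι ⊕ κ) ↦ i.elim P (Sum.elim (H ⊔ S ·) (P ⊔ T ·)))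
    (by
      rintro (_ | i | j)
      · exact hne_top P (by omega)
      · exact hne_top (H ⊔ S i) <| (finrank_add_le_finrank_add_finrank H (S i)).trans
          (by have := hS i; omega)
      · exact hne_top (P ⊔ T j) <| (finrank_add_le_finrank_add_finrank P (T j)).trans
          (by have := hT j; omega))
  have hxH : x ∉ H := fun h ↦ hx none (hHP h)
  refine ⟨H ⊔ K ∙ x, by rw [finrank_sup_span_singleton hxH]; omega, ?_, fun i ↦ ?_, fun j ↦ ?_⟩
  · have := finrank_mono (le_inf le_sup_left hHP : H ≤ (H ⊔ K ∙ x) ⊓ P)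
    omega
  · rw [sup_span_singleton_inf_eq_inf (hx (some (.inl i)))]
    by_cases hPS : P ⊓ S i = ⊥
    · rw [eq_bot_iff.mpr ((inf_le_inf_right _ hHP).trans hPS.le), finrank_bot]
      exact Nat.zero_le _
    · have hlt : H ⊓ S i < P ⊓ S i := lt_of_le_of_ne (inf_le_inf_right _ hHP) fun h ↦
        hcut ⟨i, hPS⟩ (h ▸ inf_le_left)
      have := finrank_lt_finrank_of_lt hlt
      omega
  · rw [sup_right_comm, sup_eq_right.mpr hHP, inf_comm, sup_span_singleton_inf_eq_inf
      (hx (some (.inr j))), inf_comm]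

end Submodule

namespace SimpleGraph

variable {V : Type*} {G : SimpleGraph V}

theorem IsAcyclic.eq_of_adj_of_preconnected_induce (hG : G.IsAcyclic) {s : Set V}
    (hs : (G.induce s).Preconnected) {y p z : V} (hy : y ∈ s) (hp : p ∈ s) (hz : z ∉ s)
    (hyz : G.Adj y z) (hpz : G.Adj p z) : y = p := by
  obtain ⟨q, hq⟩ := (hs ⟨y, hy⟩ ⟨p, hp⟩).exists_isPath
  let q' := q.map (Embedding.induce (G := G) s).toHom
  have hq' : q'.IsPath :=
    (Walk.isPath_map_iff_of_injective (Embedding.induce (G := G) s).injective).mpr hq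
  have hzq : z ∉ q'.support := by
    simp only [q', Walk.support_map, List.mem_map, not_exists, not_and]
    rintro ⟨v, hv⟩ - rfl
    exact hz hv
  have := hG.eq_snd_of_adj_start (hq'.cons hzq (h := hyz.symm)) hpz.symm (by simp)
  exact (this.trans (Walk.snd_cons q' hyz.symm)).symm

theorem IsTree.induction_on_insert [Fintype V] [DecidableEq V] (hG : G.IsTree)
    {P : Finset V → Prop} (base : ∀ r, P {r})
    (step : ∀ s z p, P s → z ∉ s → p ∈ s → G.Adj p z → (∀ y ∈ s, G.Adj y z → y = p) →
      P (insert z s)) :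
    P Finset.univ := by
  classical
  obtain ⟨r⟩ := hG.connected.nonempty
  obtain ⟨s, hs, hmax⟩ := Finset.exists_max_image
    {s : Finset V | P s ∧ (G.induce (s : Set V)).Connected} Finset.card
    ⟨{r}, by simpa using ⟨base r, Connected.of_subsingleton⟩⟩
  obtain ⟨hPs, hconn⟩ := Finset.mem_filter.mp hs |>.2
  by_contra hne
  obtain ⟨b, hb⟩ : ∃ b, b ∉ s := by
    by_contra! h
    exact hne (Finset.eq_univ_iff_forall.mpr h ▸ hPs)
  obtain ⟨⟨a, ha⟩⟩ := hconn.nonempty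
  obtain ⟨d, -, hd, hd'⟩ := (hG.connected a b).some.exists_boundary_dart s ha hb
  have huniq (y) (hy : y ∈ s) (hyz : G.Adj y d.snd) : y = d.fst :=
    hG.isAcyclic.eq_of_adj_of_preconnected_induce hconn.preconnected hy hd hd' hyz d.adj
  have hconn' : (G.induce (insert d.snd s : Finset V)).Connected := by
    rw [Finset.coe_insert, Set.insert_eq, Set.union_comm]
    exact connected_induce_union hconn.preconnected Preconnected.of_subsingleton hd rfl d.adj
  have := hmax (insert d.snd s) (by simp [step s _ _ hPs hd' hd d.adj huniq, hconn'])
  rw [Finset.card_insert_of_notMem hd'] at this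
  omega

end SimpleGraph

section Alignment

variable {V K W : Type*} [Field K] [AddCommGroup W] [Module K W]

structure IsAlignedOn (G : SimpleGraph V) (Δ : ℕ) (s : Finset V) (E : V → Submodule K W) :
    Prop where
  finrank_eq : ∀ v ∈ s, finrank K (E v) = Δ
  le_finrank_inf_of_adj : ∀ u ∈ s, ∀ v ∈ s, G.Adj u v → Δ - 1 ≤ finrank K ↥(E u ⊓ E v)
  finrank_inf_sup_le : ∀ w ∈ s, ∀ u ∈ s, ∀ v ∈ s, (G.Adj u v ∨ u = v) →
    finrank K ↥(E w ⊓ (E u ⊔ E v)) ≤ Δ - min (G.dist w u) (G.dist w v)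

variable [FiniteDimensional K W] {G : SimpleGraph V} {Δ : ℕ}

theorem finrank_inf_le_sub_min_dist_of_eq {A B : Submodule K W} (hA : finrank K A = Δ)
    {w u v : V} (h : w = u ∨ w = v) :
    finrank K ↥(A ⊓ B) ≤ Δ - min (G.dist w u) (G.dist w v) := by
  have : min (G.dist w u) (G.dist w v) = 0 := by rcases h with rfl | rfl <;> simp
  rw [this, Nat.sub_zero, ← hA]
  exact Submodule.finrank_mono inf_le_left

theorem exists_isAlignedOn_singleton (hΔ : Δ ≤ finrank K W) (r : V) :
    ∃ E : V → Submodule K W, IsAlignedOn G Δ {r} E := by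
  obtain ⟨f, hf⟩ := exists_linearIndependent_of_le_finrank hΔ
  have hrank : finrank K (Submodule.span K (Set.range f)) = Δ := by
    rw [finrank_span_eq_card hf, Fintype.card_fin]
  refine ⟨fun _ ↦ Submodule.span K (Set.range f), ⟨fun _ _ ↦ hrank, ?_, ?_⟩⟩
  · simp
  · simp only [Finset.mem_singleton]
    rintro w rfl u rfl v rfl -
    exact finrank_inf_le_sub_min_dist_of_eq hrank (Or.inl rfl)

theorem SimpleGraph.Walk.sub_length_le_finrank_inf {E : V → Submodule K W}
    (hE : ∀ v, finrank K (E v) = Δ) (hadj : ∀ u v, G.Adj u v → Δ - 1 ≤ finrank K ↥(E u ⊓ E v))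
    {u v : V} (q : G.Walk u v) : Δ - q.length ≤ finrank K ↥(E u ⊓ E v) := by
  induction q with
  | nil => rw [length_nil, inf_idem, hE, Nat.sub_zero]
  | @cons u m v hum q ih =>
    have hchain := Submodule.finrank_inf_add_finrank_inf_le (E u) (E m) (E v)
    have hedge := hadj u m hum
    rw [hE] at hchain
    rw [length_cons]
    omega

namespace IsAlignedOn

variable {s : Finset V} {E : V → Submodule K W}

theorem finrank_sup_le (h : IsAlignedOn G Δ s E) {u v : V} (hu : u ∈ s) (hv : v ∈ s)
    (huv : G.Adj u v ∨ u = v) : finrank K ↥(E u ⊔ E v) ≤ Δ + 1 := by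
  rcases huv with huv | rfl
  · have := Submodule.finrank_sup_add_finrank_inf_eq (E u) (E v)
    have := h.le_finrank_inf_of_adj u hu v hv huv
    have := h.finrank_eq u hu
    have := h.finrank_eq v hv
    omega
  · rw [sup_idem, h.finrank_eq u hu]
    omega

theorem insert_update [DecidableEq V] (h : IsAlignedOn G Δ s E) {z p : V} (hz : z ∉ s)
    (huniq : ∀ y ∈ s, G.Adj y z → y = p) {F : Submodule K W} (hF : finrank K F = Δ)
    (hFp : Δ - 1 ≤ finrank K ↥(F ⊓ E p))
    (hFpair : ∀ u ∈ s, ∀ v ∈ s, (G.Adj u v ∨ u = v) →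
      finrank K ↥(F ⊓ (E u ⊔ E v)) ≤ Δ - min (G.dist z u) (G.dist z v))
    (hFparent : ∀ w ∈ s, finrank K ↥(E w ⊓ (F ⊔ E p)) ≤ Δ - G.dist w p) :
    IsAlignedOn G Δ (insert z s) (Function.update E z F) := by
  have hE's (y) (hy : y ∈ s) : Function.update E z F y = E y :=
    Function.update_of_ne (ne_of_mem_of_not_mem hy hz) F E
  have hrank (v) (hv : v ∈ insert z s) : finrank K (Function.update E z F v) = Δ := by
    rcases Finset.mem_insert.mp hv with rfl | hv
    · rwa [Function.update_self]
    · rw [hE's v hv, h.finrank_eq v hv]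
  refine ⟨hrank, fun u hu v hv huv ↦ ?_, fun w hw u hu v hv huv ↦ ?_⟩
  · rw [Finset.mem_insert] at hu hv
    rcases hu with rfl | hu <;> rcases hv with rfl | hv
    · exact (G.irrefl huv).elim
    · obtain rfl := huniq v hv huv.symm
      rwa [Function.update_self, hE's _ hv]
    · obtain rfl := huniq u hu huv
      rwa [Function.update_self, hE's _ hu, inf_comm]
    · rw [hE's u hu, hE's v hv]
      exact h.le_finrank_inf_of_adj u hu v hv huv
  by_cases hwuv : w = u ∨ w = v
  · exact finrank_inf_le_sub_min_dist_of_eq (hrank w hw) hwuv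
  obtain ⟨hwu, hwv⟩ := not_or.mp hwuv
  rw [Finset.mem_insert] at hw hu hv
  rcases hw with rfl | hw
  · have hu := hu.resolve_left (Ne.symm hwu)
    have hv := hv.resolve_left (Ne.symm hwv)
    rw [Function.update_self, hE's u hu, hE's v hv]
    exact hFpair u hu v hv huv
  rcases hu with rfl | hu <;> rcases hv with rfl | hv
  · have := hFpair w hw w hw (Or.inr rfl)
    rw [sup_idem, min_self] at this
    rwa [hE's w hw, Function.update_self, sup_idem, inf_comm, min_self, SimpleGraph.dist_comm]
  · obtain rfl := huniq v hv (huv.resolve_right (ne_of_mem_of_not_mem hv hz).symm).symm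
    rw [hE's w hw, Function.update_self, hE's _ hv]
    exact (hFparent w hw).trans (Nat.sub_le_sub_left (min_le_right _ _) _)
  · obtain rfl := huniq u hu (huv.resolve_right (ne_of_mem_of_not_mem hu hz))
    rw [hE's w hw, Function.update_self, hE's _ hu, sup_comm]
    exact (hFparent w hw).trans (Nat.sub_le_sub_left (min_le_left _ _) _)
  · rw [hE's w hw, hE's u hu, hE's v hv]
    exact h.finrank_inf_sup_le w hw u hu v hv huv

theorem exists_insert [DecidableEq V] [Infinite K] (h : IsAlignedOn G Δ s E) (hΔ : 1 ≤ Δ)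
    (hW : 2 * Δ < finrank K W) {z p : V} (hz : z ∉ s) (hp : p ∈ s) (hpz : G.Adj p z)
    (huniq : ∀ y ∈ s, G.Adj y z → y = p) :
    ∃ E' : V → Submodule K W, IsAlignedOn G Δ (insert z s) E' := by
  classical
  let pairs := (s ×ˢ s).filter fun q : V × V ↦ G.Adj q.1 q.2 ∨ q.1 = q.2
  obtain ⟨F, hF, hFp, hFS, hFT⟩ := Submodule.exists_generic_child hΔ hW (h.finrank_eq p hp)
    (S := fun q : pairs ↦ E q.1.1 ⊔ E q.1.2)
    (fun q ↦ by
      obtain ⟨huv, huv'⟩ := Finset.mem_filter.mp q.2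
      exact h.finrank_sup_le (Finset.mem_product.mp huv).1 (Finset.mem_product.mp huv).2 huv')
    (T := fun w : s ↦ E w) (fun w ↦ (h.finrank_eq w w.2).le)
  have hdist (y : V) : G.dist z y ≤ G.dist p y + 1 := by
    have := hpz.symm.reachable.dist_triangle_left y
    rwa [SimpleGraph.dist_eq_one_iff_adj.mpr hpz.symm, add_comm] at this
  refine ⟨_, h.insert_update hz huniq hF hFp (fun u hu v hv huv ↦ ?_) (fun w hw ↦ ?_)⟩
  · have h1 := hFS ⟨(u, v), by simp [pairs, hu, hv, huv]⟩
    have h2 := h.finrank_inf_sup_le p hp u hu v hv huv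
    have := hdist u
    have := hdist v
    dsimp only at h1
    omega
  · have h1 := hFT ⟨w, hw⟩
    have h2 := h.finrank_inf_sup_le w hw p hp p hp (Or.inr rfl)
    dsimp only at h1
    rwa [h1, ← min_self (G.dist w p), ← sup_idem (E p)]

end IsAlignedOn

end Alignment

/-- **Tree subspace assignment in the proof of Theorem 11** (alignment sets
without cycles). For every `Δ ≥ 1` and every finite tree `G` (connected and
acyclic) with graph distance `d`, one can assign a `Δ`-dimensional subspace
`E v ⊆ ℂ^{2Δ+1}` to each vertex `v` such that:
(i) `dim (E u ⊓ E v) ≥ Δ − d(u, v)` for all `u, v`; and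
(ii) whenever `u` and `v` are adjacent or equal and `w` is at distance at
least `Δ` from both, `E w ⊓ (E u ⊔ E v) = ⊥`. -/
theorem tim_tree_subspace_assignment
    (Δ : ℕ) (hΔ : 1 ≤ Δ) {V : Type*} [Fintype V]
    (G : SimpleGraph V) (hconn : G.Connected) (hacyc : G.IsAcyclic) :
    ∃ E : V → Submodule ℂ (Fin (2 * Δ + 1) → ℂ),
      (∀ v : V, Module.finrank ℂ (E v) = Δ) ∧
      -- (i)
      (∀ u v : V, Δ - G.dist u v ≤ Module.finrank ℂ ↥(E u ⊓ E v)) ∧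
      -- (ii)
      (∀ w u v : V, (G.Adj u v ∨ u = v) →
        Δ ≤ G.dist w u → Δ ≤ G.dist w v →
        E w ⊓ (E u ⊔ E v) = ⊥) := by
  classical
  have hW : 2 * Δ < finrank ℂ (Fin (2 * Δ + 1) → ℂ) := by simp
  obtain ⟨E, hE⟩ : ∃ E : V → Submodule ℂ (Fin (2 * Δ + 1) → ℂ), IsAlignedOn G Δ .univ E :=
    SimpleGraph.IsTree.induction_on_insert ⟨hconn, hacyc⟩ (P := fun s ↦ ∃ E, IsAlignedOn G Δ s E)
      (exists_isAlignedOn_singleton (by omega))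
      fun _ _ _ ⟨_, hE⟩ hz hp hpz huniq ↦ hE.exists_insert hΔ hW hz hp hpz huniq
  have hrank (v : V) : finrank ℂ (E v) = Δ := hE.finrank_eq v (Finset.mem_univ v)
  refine ⟨E, hrank, fun u v ↦ ?_, fun w u v huv hu hv ↦ ?_⟩
  · obtain ⟨q, hq⟩ := (hconn u v).exists_walk_length_eq_dist
    exact hq ▸ q.sub_length_le_finrank_inf hrank fun u v ↦
      hE.le_finrank_inf_of_adj u (Finset.mem_univ u) v (Finset.mem_univ v)
  · have := hE.finrank_inf_sup_le w (Finset.mem_univ w) u (Finset.mem_univ u) v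
      (Finset.mem_univ v) huv
    exact Submodule.finrank_eq_zero.mp (by omega)
end

section
/- Explicit family showing the best-case gain of alignment over orthogonal scheduling is K/2 (core of Theorem groupcast-orthogonal): For every natural number K ≥ 2, consider the K-groupcast TIM instance over ℂ with messages Fin K (message k originating at source k), destinations indexed by ordered pairs (i, j) ∈ Fin K × Fin K with i ≠ j, where destination (i, j) desires message i and hears exactly the sources i and j. Then: (a) there exists v : Fin K → ℂ² such that v(i) and v(j) are linearly independent for all i ≠ j, and consequently for every destination (i, j) there is a covector u ∈ ℂ² whose inner product with v(j) is 0 and whose inner product with v(i) is nonzero (a linear scheme with N = 2 channel uses and L = 1 symbol per message, achieving symmetric rate 1/2); and (b) every pair of distinct messages conflicts (for all i ≠ j, message j interferes at destination (i, j), which desires message i), so every conflict-independent set of messages has at most one element. -/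
open Matrix

lemma fin_cast_inj {K : ℕ} {i j : Fin K} (h : i ≠ j) : ((i : ℕ) : ℂ) ≠ ((j : ℕ) : ℂ) := by
  intro hc
  exact h (Fin.ext (Nat.cast_injective hc))

/-- **Explicit family showing the best-case gain of alignment over orthogonal
scheduling is `K/2`** (core of the theorem on groupcast vs orthogonal
scheduling). In the `K`-groupcast instance whose destinations are the ordered
pairs `(i, j)` with `i ≠ j`, where destination `(i, j)` desires message `i`
and hears exactly the sources `i` and `j`:
(a) pairwise linearly independent vectors in `ℂ²` give a linear scheme with
`N = 2` channel uses and `L = 1` symbol per message (symmetric rate `1/2`); and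
(b) every pair of distinct messages conflicts, so every conflict-independent
set of messages has at most one element. -/
theorem tim_groupcast_vs_orthogonal_family (K : ℕ) (hK : 2 ≤ K) :
    -- topology: destination (i, j) hears exactly sources i and j
    let t : Fin K × Fin K → Fin K → Bool := fun p k => decide (k = p.1 ∨ k = p.2)
    -- (a) a half-rate linear scheme exists
    ((∃ v : Fin K → (Fin 2 → ℂ),
        (∀ i j : Fin K, i ≠ j → LinearIndependent ℂ ![v i, v j]) ∧
        (∀ p : Fin K × Fin K, p.1 ≠ p.2 →
          ∃ u : Fin 2 → ℂ, u ⬝ᵥ v p.2 = 0 ∧ u ⬝ᵥ v p.1 ≠ 0)) ∧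
    -- (b) every pair of distinct messages conflicts ...
    (∀ i j : Fin K, i ≠ j →
        ∃ p : Fin K × Fin K, p.1 ≠ p.2 ∧ p.1 = i ∧ t p j = true) ∧
    -- ... hence every conflict-independent set of messages is a singleton
    (∀ S : Finset (Fin K),
        (∀ a ∈ S, ∀ b ∈ S, a ≠ b →
          ¬ ∃ p : Fin K × Fin K, p.1 ≠ p.2 ∧ p.1 = a ∧ t p b = true) →
        S.card ≤ 1)) := by
  intro t
  refine ⟨⟨fun i => ![1, ((i : ℕ) : ℂ)], ?_, ?_⟩, ?_, ?_⟩
  · intro i j hij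
    rw [LinearIndependent.pair_iff]
    intro s r hsr
    have h0 := congrFun hsr 0
    have h1 := congrFun hsr 1
    simp [Matrix.smul_cons] at h0 h1
    have hs : s = -r := by linear_combination h0
    subst hs
    have : r * (((j : ℕ) : ℂ) - ((i : ℕ) : ℂ)) = 0 := by ring_nf; linear_combination h1
    rcases mul_eq_zero.1 this with hr | hd
    · exact ⟨by simp [hr], hr⟩
    · exact absurd (sub_eq_zero.1 hd) (fin_cast_inj hij).symm
  · intro p hp
    refine ⟨![((p.2 : ℕ) : ℂ), -1], ?_, ?_⟩
    · simp [dotProduct, Fin.sum_univ_two]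
    · simp only [dotProduct, Fin.sum_univ_two]
      simp only [Matrix.cons_val_zero, Matrix.cons_val_one, Matrix.head_cons]
      intro h
      apply fin_cast_inj hp
      linear_combination -h
  · intro i j hij
    exact ⟨(i, j), hij.symm ∘ Eq.symm, rfl, by simp [t]⟩
  · intro S hS
    rw [Finset.card_le_one]
    intro a ha b hb
    by_contra hab
    exact hS a ha b hb hab ⟨(a, b), hab, rfl, by simp [t]⟩
end
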